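/- arXiv:2506.01893 — 4 statements merged into one kernel-verified Lean document; each statement's English description precedes it below -/
import Mathlib

section
/- In the setting of the context, for every y ∈ Ŷ one has |E_{Q_y}[f(Z)] − F(y)| ≤ 2·∑_{i=1}^n max_{ℓ,ℓ'∈[K_i]} c_{i,ℓ;i,ℓ'}, where E_{Q_y}[f(Z)] := ∑_{z∈Z} Q_y(z) f(z). -/
open BigOperators

noncomputable section

namespace Meta

variable {n : ℕ} {K : Fin n → ℕ}

/-- Index set for the coordinates: pairs `(i, ℓ)` with `i ∈ [n]`, `ℓ ∈ [K_i]`. -/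
abbrev Idx (K : Fin n → ℕ) := Σ i : Fin n, Fin (K i)

/-- The ambient space `∏_{i=1}^n ℝ^{K_i}`. -/
abbrev Vec (K : Fin n → ℕ) := Idx K → ℝ

/-- The configuration space `Z = ∏_{i=1}^n [K_i]`. -/
abbrev Conf (K : Fin n → ℕ) := (i : Fin n) → Fin (K i)

/-- The closed cube `∏_{i=1}^n [0,1]^{K_i}`. -/
def cube (K : Fin n → ℕ) : Set (Vec K) := {y | ∀ s, 0 ≤ y s ∧ y s ≤ 1}

/-- The open cube `∏_{i=1}^n (0,1)^{K_i}`. -/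
def openCube (K : Fin n → ℕ) : Set (Vec K) := {y | ∀ s, 0 < y s ∧ y s < 1}

/-- `Ŷ`: rows are probability vectors. -/
def Yhat (K : Fin n → ℕ) : Set (Vec K) :=
  {y | y ∈ cube K ∧ ∀ i, ∑ ℓ : Fin (K i), y ⟨i, ℓ⟩ = 1}

/-- One-hot encoding `G(z)`. -/
def onehot (z : Conf K) : Vec K := fun s => if z s.1 = s.2 then 1 else 0

/-- `U¹(y; i, ℓ)`: `y` with its `i`-th row replaced by the `ℓ`-th standard basis vector. -/
def U1 (y : Vec K) (s₀ : Idx K) : Vec K :=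
  fun s => if s.1 = s₀.1 then (if s = s₀ then 1 else 0) else y s

/-- `U⁰(y; i)`: `y` with its `i`-th row replaced by the zero vector. -/
def U0 (y : Vec K) (i₀ : Fin n) : Vec K :=
  fun s => if s.1 = i₀ then 0 else y s

/-- The regularity assumption: `F` is continuous on the closed cube, `F1 s` is the partial
derivative of `F` in coordinate `s` on the open cube, `F2 s s'` is the partial derivative of
`F1 s'` in coordinate `s` on the open cube, and `F1`, `F2` are continuous on the closed cube
(i.e. `F` is C² in the interior and `F` and its first and second order partial derivatives
extend continuously to the boundary). -/
def SmoothData (F : Vec K → ℝ) (F1 : Idx K → Vec K → ℝ)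
    (F2 : Idx K → Idx K → Vec K → ℝ) : Prop :=
  ContinuousOn F (cube K) ∧
  (∀ s, ContinuousOn (F1 s) (cube K)) ∧
  (∀ s s', ContinuousOn (F2 s s') (cube K)) ∧
  (∀ y ∈ openCube K, ∀ s,
      HasDerivAt (fun t => F (Function.update y s t)) (F1 s y) (y s)) ∧
  (∀ y ∈ openCube K, ∀ s s',
      HasDerivAt (fun t => F1 s' (Function.update y s t)) (F2 s s' y) (y s))

/-- `b_{i,ℓ} = sup_{cube} |F_{i,ℓ}|`. -/
def bC (F1 : Idx K → Vec K → ℝ) (s : Idx K) : ℝ :=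
  sSup ((fun y => |F1 s y|) '' cube K)

/-- `c_{i,ℓ;j,ℓ'} = sup_{cube} |F_{i,ℓ;j,ℓ'}|`. -/
def cC (F2 : Idx K → Idx K → Vec K → ℝ) (s s' : Idx K) : ℝ :=
  sSup ((fun y => |F2 s s' y|) '' cube K)

/-- The neighborhood `N^I(y)`: points of the cube differing from `y` in at most two rows. -/
def NI (y : Vec K) : Set (Vec K) :=
  {y' | y' ∈ cube K ∧ ∃ i₀ i₀' : Fin n,
    ∀ s : Idx K, s.1 ≠ i₀ → s.1 ≠ i₀' → y' s = y s}

/-- Local Hessian bound I. -/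
def HI (F2 : Idx K → Idx K → Vec K → ℝ) (s s' : Idx K) (y : Vec K) : ℝ :=
  sSup ((fun y' => |F2 s s' y'|) '' NI y)

/-- The neighborhood `N^II(y, M)`. -/
def NII (y : Vec K) (M : ℝ) : Set (Vec K) :=
  {y' | y' ∈ cube K ∧ ∃ i₀ : Fin n,
    ∀ s : Idx K, s.1 ≠ i₀ → (M⁻¹ * y s ≤ y' s ∧ y' s ≤ M * y s)}

/-- Local Hessian bound II. -/
def HII (F2 : Idx K → Idx K → Vec K → ℝ) (s s' : Idx K) (y : Vec K) (M : ℝ) : ℝ :=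
  sSup ((fun y' => |F2 s s' y'|) '' NII y M)

/-- `M_j = exp(2 max_{i,ℓ,ℓ'} c_{i,ℓ;j,ℓ'})`. -/
def Mc (F2 : Idx K → Idx K → Vec K → ℝ) (j : Fin n) : ℝ :=
  Real.exp (2 * ⨆ i : Fin n, ⨆ ℓ : Fin (K i), ⨆ ℓ' : Fin (K j), cC F2 ⟨i, ℓ⟩ ⟨j, ℓ'⟩)

/-- `Φ_{i,j}(y)`. -/
def Phi (F2 : Idx K → Idx K → Vec K → ℝ) (i j : Fin n) (y : Vec K) : ℝ :=
  Real.exp (2 * ∑ ℓ' : Fin (K j), (⨆ ℓ : Fin (K i), HI F2 ⟨i, ℓ⟩ ⟨j, ℓ'⟩ y) * y ⟨j, ℓ'⟩) - 1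

/-- The smoothness term `E₁`. -/
def E1 (F2 : Idx K → Idx K → Vec K → ℝ) : ℝ :=
  (⨆ y ∈ Yhat K, ∑ i : Fin n, ⨆ j : Fin n, Phi F2 j i y) *
      (⨆ y ∈ Yhat K, ⨆ s : Idx K, ∑ s' : Idx K, HII F2 s s' y (Mc F2 s.1) * y s') +
    ⨆ y ∈ Yhat K, ∑ i : Fin n, ⨆ ℓ : Fin (K i),
      ∑ ℓ' : Fin (K i), HII F2 ⟨i, ℓ⟩ ⟨i, ℓ'⟩ y (Mc F2 i) * y ⟨i, ℓ'⟩

/-- `Λ(t) = log(2 + (∑_i max_ℓ b_{i,ℓ})/t)`. -/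
def Lam (F1 : Idx K → Vec K → ℝ) (t : ℝ) : ℝ :=
  Real.log (2 + (∑ i : Fin n, ⨆ ℓ : Fin (K i), bC F1 ⟨i, ℓ⟩) / t)

/-- `I(y) = ∑_{i,ℓ} y_{i,ℓ} log(y_{i,ℓ}/μ_i(ℓ))` (with `0 log 0 = 0`). -/
def Ifun (μ : (i : Fin n) → Fin (K i) → ℝ) (y : Vec K) : ℝ :=
  ∑ s : Idx K, y s * Real.log (y s / μ s.1 s.2)

/-- The product base measure `μ(z) = ∏ᵢ μᵢ(zᵢ)`. -/
def muProd (μ : (i : Fin n) → Fin (K i) → ℝ) (z : Conf K) : ℝ :=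
  ∏ i, μ i (z i)

/-- The partition function `S = ∑_z e^{f(z)} μ(z)`. -/
def Spart (μ : (i : Fin n) → Fin (K i) → ℝ) (f : Conf K → ℝ) : ℝ :=
  ∑ z : Conf K, Real.exp (f z) * muProd μ z

/-- The (collapsed) posterior `P(z) = e^{f(z)} μ(z) / S`. -/
def Ppost (μ : (i : Fin n) → Fin (K i) → ℝ) (f : Conf K → ℝ) (z : Conf K) : ℝ :=
  Real.exp (f z) * muProd μ z / Spart μ f

/-- The product distribution `Q_y(z) = ∏ᵢ y_{i,zᵢ}`. -/
def Qy (y : Vec K) (z : Conf K) : ℝ := ∏ i, y ⟨i, z i⟩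

/-- KL divergence of probability mass functions on the finite configuration space
(here the second argument is everywhere positive, and `0·log(0/p) = 0` holds automatically). -/
def KLfin (Q P : Conf K → ℝ) : ℝ := ∑ z : Conf K, Q z * Real.log (Q z / P z)

/-- `D` is an `ε`-cover for `F`. -/
def IsCover (F : Vec K → ℝ) (ε : ℝ) (Dc : Finset (Vec K)) : Prop :=
  ∀ y ∈ Yhat K, ∃ d ∈ Dc,
    ∑ i : Fin n, ⨆ ℓ : Fin (K i), |F (U1 y ⟨i, ℓ⟩) - F (U0 y i) - d ⟨i, ℓ⟩| ≤ ε

end Meta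
namespace Meta

variable {n : ℕ} {K : Fin n → ℕ}

lemma openCube_subset_cube : openCube K ⊆ cube K :=
  fun y hy s => ⟨(hy s).1.le, (hy s).2.le⟩

lemma isOpen_openCube : IsOpen (openCube K) := by
  have h : openCube K = Set.pi Set.univ (fun _ : Idx K => Set.Ioo (0:ℝ) 1) := by
    ext y; simp [openCube, Set.mem_pi, Set.mem_Ioo]
  rw [h]
  exact isOpen_set_pi Set.finite_univ fun _ _ => isOpen_Ioo

lemma isCompact_cube : IsCompact (cube K) := by
  have h : cube K = Set.pi Set.univ (fun _ : Idx K => Set.Icc (0:ℝ) 1) := by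
    ext y; simp [cube, Set.mem_pi, Set.mem_Icc, Pi.le_def, forall_and]
  rw [h]; exact isCompact_univ_pi fun _ => isCompact_Icc

lemma zero_mem_cube : (fun _ => 0 : Vec K) ∈ cube K := fun _ => ⟨le_refl _, zero_le_one⟩

lemma abs_le_sSup_cube {g : Vec K → ℝ} (hg : ContinuousOn g (cube K)) {y : Vec K}
    (hy : y ∈ cube K) : |g y| ≤ sSup ((fun y => |g y|) '' cube K) := by
  apply le_csSup
  · exact (isCompact_cube.image_of_continuousOn hg.abs).bddAbove
  · exact Set.mem_image_of_mem _ hy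

lemma sSup_cube_nonneg {g : Vec K → ℝ} (hg : ContinuousOn g (cube K)) :
    0 ≤ sSup ((fun y => |g y|) '' cube K) :=
  le_trans (abs_nonneg _) (abs_le_sSup_cube hg zero_mem_cube)

/-- First-order Taylor estimate for a coordinate-wise increment. -/
lemma incr_taylor (G : Vec K → ℝ) (G1 : Idx K → Vec K → ℝ)
    (hd : ∀ y ∈ openCube K, ∀ s, HasDerivAt (fun t => G (Function.update y s t)) (G1 s y) (y s))
    (z w : Vec K)
    (hbox : ∀ ξ : Vec K, (∀ s, ξ s ∈ Set.uIcc (z s) (w s)) → ξ ∈ openCube K)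
    (ε : ℝ)
    (herr : ∀ (s : Idx K) (ξ : Vec K), (∀ s', ξ s' ∈ Set.uIcc (z s') (w s')) →
      |G1 s ξ - G1 s z| ≤ ε) :
    |G w - G z - ∑ s, (w s - z s) * G1 s z| ≤ ε * ∑ s, |w s - z s| := by
  classical
  set mix : Finset (Idx K) → Vec K := fun A s => if s ∈ A then w s else z s with hmixdef
  have key : ∀ A : Finset (Idx K),
      |G (mix A) - G z - ∑ s ∈ A, (w s - z s) * G1 s z| ≤ ε * ∑ s ∈ A, |w s - z s| := by
    intro A
    induction A using Finset.induction_on with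
    | empty =>
        have h0 : mix ∅ = z := funext fun s => if_neg (Finset.notMem_empty s)
        simp [h0]
    | @insert s A hs ih =>
        have hmemA : ∀ t ∈ Set.uIcc (z s) (w s), ∀ s',
            Function.update (mix A) s t s' ∈ Set.uIcc (z s') (w s') := by
          intro t ht s'
          by_cases h : s' = s
          · subst h; rw [Function.update_self]; exact ht
          · rw [Function.update_of_ne h]
            dsimp only [mix]
            split_ifs
            · exact Set.right_mem_uIcc
            · exact Set.left_mem_uIcc
        have hupd1 : Function.update (mix A) s (w s) = mix (insert s A) := by
          funext s'
          by_cases h : s' = s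
          · subst h; simp [Function.update_self, mix]
          · rw [Function.update_of_ne h]
            simp only [mix]
            have : s' ∈ insert s A ↔ s' ∈ A := by
              simp [Finset.mem_insert, h]
            by_cases h2 : s' ∈ A <;> simp [h2, this]
        have hupd0 : Function.update (mix A) s (z s) = mix A := by
          have : mix A s = z s := if_neg hs
          conv_lhs => rw [← this]
          exact Function.update_eq_self _ _
        set g : ℝ → ℝ := fun t => G (Function.update (mix A) s t) - t * G1 s z with hg
        have hgd : ∀ t ∈ Set.uIcc (z s) (w s),
            HasDerivWithinAt g (G1 s (Function.update (mix A) s t) - G1 s z)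
              (Set.uIcc (z s) (w s)) t := by
          intro t ht
          have h1 := hd (Function.update (mix A) s t) (hbox _ (hmemA t ht)) s
          rw [Function.update_self] at h1
          have h2 : (fun u => G (Function.update (Function.update (mix A) s t) s u))
              = fun u => G (Function.update (mix A) s u) := by
            funext u; rw [Function.update_idem]
          rw [h2] at h1
          exact ((h1.sub (hasDerivAt_mul_const (G1 s z))).hasDerivWithinAt)
        have hbound : ∀ t ∈ Set.uIcc (z s) (w s),
            ‖G1 s (Function.update (mix A) s t) - G1 s z‖ ≤ ε := by
          intro t ht
          rw [Real.norm_eq_abs]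
          exact herr s _ (hmemA t ht)
        have hmvt := Convex.norm_image_sub_le_of_norm_hasDerivWithin_le hgd hbound
          (convex_uIcc _ _) Set.left_mem_uIcc Set.right_mem_uIcc
        rw [Real.norm_eq_abs, Real.norm_eq_abs] at hmvt
        have hgval : g (w s) - g (z s)
            = G (mix (insert s A)) - G (mix A) - (w s - z s) * G1 s z := by
          simp only [hg, hupd1, hupd0]; ring
        rw [hgval] at hmvt
        rw [Finset.sum_insert hs, Finset.sum_insert hs]
        calc |G (mix (insert s A)) - G z -
              ((w s - z s) * G1 s z + ∑ s ∈ A, (w s - z s) * G1 s z)|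
            ≤ |G (mix (insert s A)) - G (mix A) - (w s - z s) * G1 s z|
              + |G (mix A) - G z - ∑ s ∈ A, (w s - z s) * G1 s z| := by
              have : G (mix (insert s A)) - G z -
                  ((w s - z s) * G1 s z + ∑ s ∈ A, (w s - z s) * G1 s z)
                  = (G (mix (insert s A)) - G (mix A) - (w s - z s) * G1 s z)
                  + (G (mix A) - G z - ∑ s ∈ A, (w s - z s) * G1 s z) := by ring
              rw [this]; exact abs_add_le _ _
          _ ≤ ε * |w s - z s| + ε * ∑ s ∈ A, |w s - z s| := add_le_add hmvt ih
          _ = ε * (|w s - z s| + ∑ s ∈ A, |w s - z s|) := by ring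
  have huniv : mix Finset.univ = w := funext fun s => if_pos (Finset.mem_univ s)
  simpa [huniv] using key Finset.univ

/-- Increment bound via bounds on the partial derivatives. -/
lemma incr_bound (G : Vec K → ℝ) (G1 : Idx K → Vec K → ℝ)
    (hd : ∀ y ∈ openCube K, ∀ s, HasDerivAt (fun t => G (Function.update y s t)) (G1 s y) (y s))
    (z w : Vec K)
    (hbox : ∀ ξ : Vec K, (∀ s, ξ s ∈ Set.uIcc (z s) (w s)) → ξ ∈ openCube K)
    (C : Idx K → ℝ)
    (hC : ∀ (s : Idx K) (ξ : Vec K), (∀ s', ξ s' ∈ Set.uIcc (z s') (w s')) →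
      |G1 s ξ| ≤ C s) :
    |G w - G z| ≤ ∑ s, C s * |w s - z s| := by
  classical
  set mix : Finset (Idx K) → Vec K := fun A s => if s ∈ A then w s else z s with hmixdef
  have key : ∀ A : Finset (Idx K),
      |G (mix A) - G z| ≤ ∑ s ∈ A, C s * |w s - z s| := by
    intro A
    induction A using Finset.induction_on with
    | empty =>
        have h0 : mix ∅ = z := funext fun s => if_neg (Finset.notMem_empty s)
        simp [h0]
    | @insert s A hs ih =>
        have hmemA : ∀ t ∈ Set.uIcc (z s) (w s), ∀ s',
            Function.update (mix A) s t s' ∈ Set.uIcc (z s') (w s') := by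
          intro t ht s'
          by_cases h : s' = s
          · subst h; rw [Function.update_self]; exact ht
          · rw [Function.update_of_ne h]
            dsimp only [mix]
            split_ifs
            · exact Set.right_mem_uIcc
            · exact Set.left_mem_uIcc
        have hupd1 : Function.update (mix A) s (w s) = mix (insert s A) := by
          funext s'
          by_cases h : s' = s
          · subst h; simp [Function.update_self, mix]
          · rw [Function.update_of_ne h]
            simp only [mix]
            have : s' ∈ insert s A ↔ s' ∈ A := by
              simp [Finset.mem_insert, h]
            by_cases h2 : s' ∈ A <;> simp [h2, this]
        have hupd0 : Function.update (mix A) s (z s) = mix A := by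
          have : mix A s = z s := if_neg hs
          conv_lhs => rw [← this]
          exact Function.update_eq_self _ _
        have hgd : ∀ t ∈ Set.uIcc (z s) (w s),
            HasDerivWithinAt (fun t => G (Function.update (mix A) s t))
              (G1 s (Function.update (mix A) s t)) (Set.uIcc (z s) (w s)) t := by
          intro t ht
          have h1 := hd (Function.update (mix A) s t) (hbox _ (hmemA t ht)) s
          rw [Function.update_self] at h1
          have h2 : (fun u => G (Function.update (Function.update (mix A) s t) s u))
              = fun u => G (Function.update (mix A) s u) := by
            funext u; rw [Function.update_idem]
          rw [h2] at h1
          exact h1.hasDerivWithinAt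
        have hbound : ∀ t ∈ Set.uIcc (z s) (w s),
            ‖G1 s (Function.update (mix A) s t)‖ ≤ C s := by
          intro t ht
          rw [Real.norm_eq_abs]
          exact hC s _ (hmemA t ht)
        have hmvt := Convex.norm_image_sub_le_of_norm_hasDerivWithin_le hgd hbound
          (convex_uIcc _ _) Set.left_mem_uIcc Set.right_mem_uIcc
        rw [Real.norm_eq_abs, Real.norm_eq_abs, hupd1, hupd0] at hmvt
        rw [Finset.sum_insert hs]
        calc |G (mix (insert s A)) - G z|
            ≤ |G (mix (insert s A)) - G (mix A)| + |G (mix A) - G z| := abs_sub_le _ _ _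
          _ ≤ C s * |w s - z s| + ∑ s ∈ A, C s * |w s - z s| := add_le_add hmvt ih
  have huniv : mix Finset.univ = w := funext fun s => if_pos (Finset.mem_univ s)
  simpa [huniv] using key Finset.univ

end Meta
namespace Meta

variable {n : ℕ} {K : Fin n → ℕ}

/-- Directional derivative from continuous partial derivatives. -/
lemma dirDeriv (G : Vec K → ℝ) (G1 : Idx K → Vec K → ℝ)
    (hG1c : ∀ s, ContinuousOn (G1 s) (cube K))
    (hd : ∀ y ∈ openCube K, ∀ s, HasDerivAt (fun t => G (Function.update y s t)) (G1 s y) (y s))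
    (z : Vec K) (hz : z ∈ openCube K) (v : Vec K) :
    HasDerivAt (fun h : ℝ => G (fun s => z s + h * v s)) (∑ s, v s * G1 s z) 0 := by
  rw [hasDerivAt_iff_isLittleO_nhds_zero, Asymptotics.isLittleO_iff]
  intro c hc
  set L : ℝ := ∑ s, |v s| with hLdef
  have hL0 : 0 ≤ L := Finset.sum_nonneg fun s _ => abs_nonneg _
  have hvL : ∀ s, |v s| ≤ L :=
    fun s => Finset.single_le_sum (fun s _ => abs_nonneg (v s)) (Finset.mem_univ s)
  set ε : ℝ := c / (L + 1) with hε
  have hε0 : 0 < ε := div_pos hc (by linarith)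
  obtain ⟨r, hr0, hball⟩ := Metric.isOpen_iff.1 isOpen_openCube z hz
  have hcubenh : cube K ∈ nhds z :=
    mem_nhds_iff.2 ⟨openCube K, openCube_subset_cube, isOpen_openCube, hz⟩
  have hev : ∀ᶠ ξ in nhds z, ∀ s, |G1 s ξ - G1 s z| < ε := by
    rw [Filter.eventually_all]
    intro s
    have h1 : ContinuousAt (G1 s) z := (hG1c s).continuousAt hcubenh
    have h2 := Metric.tendsto_nhds.mp h1 ε hε0
    simpa [Real.dist_eq] using h2
  obtain ⟨δ, hδ0, hδ⟩ := Metric.eventually_nhds_iff.1 hev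
  rw [Metric.eventually_nhds_iff]
  refine ⟨min δ r / (L + 1), by positivity, ?_⟩
  intro h hh
  rw [Real.dist_eq, sub_zero] at hh
  have hz0 : (fun s => z s + (0:ℝ) * v s) = z := funext fun s => by ring
  simp only [zero_add, hz0, smul_eq_mul, Real.norm_eq_abs]
  set w : Vec K := fun s => z s + h * v s with hw
  have hboxdist : ∀ ξ : Vec K, (∀ s, ξ s ∈ Set.uIcc (z s) (w s)) → dist ξ z ≤ |h| * (L + 1) := by
    intro ξ hξ
    rw [dist_pi_le_iff (by positivity)]
    intro s
    rw [Real.dist_eq]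
    have h1 := hξ s
    rw [Set.mem_uIcc] at h1
    have h2 : |ξ s - z s| ≤ |w s - z s| := by
      rcases h1 with ⟨ha, hb⟩ | ⟨ha, hb⟩
      · rw [abs_of_nonneg (by linarith)]
        exact le_trans (by linarith [le_abs_self (w s - z s)]) (le_refl _)
      · rw [abs_of_nonpos (by linarith)]
        have h3 := neg_le_abs (w s - z s)
        linarith
    have h3 : |w s - z s| = |h| * |v s| := by
      simp only [hw]; rw [add_sub_cancel_left, abs_mul]
    rw [h3] at h2
    calc |ξ s - z s| ≤ |h| * |v s| := h2
      _ ≤ |h| * (L + 1) := by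
          apply mul_le_mul_of_nonneg_left _ (abs_nonneg h)
          linarith [hvL s]
  have hsmall : |h| * (L + 1) < min δ r := by
    have h1 : |h| < min δ r / (L + 1) := hh
    have h2 : |h| * (L + 1) < (min δ r / (L + 1)) * (L + 1) := by
      apply mul_lt_mul_of_pos_right h1; linarith
    rwa [div_mul_cancel₀ _ (by linarith : L + 1 ≠ 0)] at h2
  have hbox : ∀ ξ : Vec K, (∀ s, ξ s ∈ Set.uIcc (z s) (w s)) → ξ ∈ openCube K := by
    intro ξ hξ
    apply hball
    rw [Metric.mem_ball]
    exact lt_of_le_of_lt (hboxdist ξ hξ) (lt_of_lt_of_le hsmall (min_le_right _ _))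
  have herr : ∀ (s : Idx K) (ξ : Vec K), (∀ s', ξ s' ∈ Set.uIcc (z s') (w s')) →
      |G1 s ξ - G1 s z| ≤ ε := by
    intro s ξ hξ
    exact le_of_lt ((hδ (lt_of_le_of_lt (hboxdist ξ hξ) (lt_of_lt_of_le hsmall
      (min_le_left _ _)))) s)
  have hmain := incr_taylor G G1 hd z w hbox ε herr
  have hsum1 : ∑ s, (w s - z s) * G1 s z = h * ∑ s, v s * G1 s z := by
    rw [Finset.mul_sum]
    apply Finset.sum_congr rfl
    intro s _
    simp only [hw]; ring
  have hsum2 : ∑ s, |w s - z s| = |h| * L := by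
    rw [hLdef, Finset.mul_sum]
    apply Finset.sum_congr rfl
    intro s _
    simp only [hw]; rw [add_sub_cancel_left, abs_mul]
  rw [hsum1, hsum2] at hmain
  have hεL : ε * L ≤ c := by
    have h1 : ε * (L + 1) = c := div_mul_cancel₀ _ (by linarith : L + 1 ≠ 0)
    nlinarith
  calc |G w - G z - h * ∑ s, v s * G1 s z| ≤ ε * (|h| * L) := hmain
    _ ≤ c * |h| := by nlinarith [abs_nonneg h]

end Meta
namespace Meta

variable {n : ℕ} {K : Fin n → ℕ}

/-- Second-order Taylor estimate along a segment. -/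
lemma taylor_seg {F : Vec K → ℝ} {F1 : Idx K → Vec K → ℝ} {F2 : Idx K → Idx K → Vec K → ℝ}
    (hsm : SmoothData F F1 F2) (w x : Vec K) (hw : w ∈ openCube K)
    (hseg : ∀ t ∈ Set.Ico (0:ℝ) 1, (fun s => w s + t * (x s - w s)) ∈ openCube K)
    (hx : x ∈ cube K) (c : ℝ) (hc0 : 0 ≤ c)
    (hc : ∀ s s', x s ≠ w s → x s' ≠ w s' → cC F2 s s' ≤ c) :
    |F x - F w - ∑ s, (x s - w s) * F1 s w| ≤ c / 2 * (∑ s, |x s - w s|) ^ 2 := by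
  obtain ⟨hFc, hF1c, hF2c, hdF, hdF1⟩ := hsm
  set v : Vec K := fun s => x s - w s with hv
  set γ : ℝ → Vec K := fun t => fun s => w s + t * v s with hγ
  have hsegγ : ∀ t ∈ Set.Ico (0:ℝ) 1, γ t ∈ openCube K := hseg
  set L : ℝ := ∑ s, |v s| with hLdef
  have hL0 : 0 ≤ L := Finset.sum_nonneg fun s _ => abs_nonneg _
  set Φ : ℝ := ∑ s, v s * F1 s w with hΦ
  set D : ℝ → ℝ := fun t => ∑ s, v s * F1 s (γ t) with hD
  have hγ0 : γ 0 = w := funext fun s => by simp [hγ]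
  have hγ1 : γ 1 = x := funext fun s => by simp [hγ, hv]
  have hγc : Continuous γ := by
    apply continuous_pi
    intro s
    exact continuous_const.add (continuous_id.mul continuous_const)
  have hasd : ∀ t ∈ Set.Ico (0:ℝ) 1, HasDerivAt (fun u => F (γ u)) (D t) t := by
    intro t ht
    have h0 := dirDeriv F F1 hF1c hdF (γ t) (hsegγ t ht) v
    have h0' : HasDerivAt (fun h : ℝ => F (fun s => γ t s + h * v s)) (D t) (t - t) := by
      rw [sub_self]; exact h0
    have h2 := h0'.comp_sub_const t t
    have h3 : (fun u : ℝ => F (fun s => γ t s + (u - t) * v s)) = fun u => F (γ u) := by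
      funext u
      congr 1
      funext s
      simp only [hγ]
      ring
    rw [h3] at h2
    exact h2
  have hvar : ∀ t ∈ Set.Ico (0:ℝ) 1, |D t - Φ| ≤ c * t * L ^ 2 := by
    intro t ht
    have hstep : ∀ s' : Idx K, v s' ≠ 0 → |F1 s' (γ t) - F1 s' w| ≤ c * t * L := by
      intro s' hvs'
      have hbox : ∀ ξ : Vec K, (∀ s, ξ s ∈ Set.uIcc (w s) (γ t s)) → ξ ∈ openCube K := by
        intro ξ hξ s
        have h1 := hw s
        have h2 := hsegγ t ht s
        have h3 := hξ s
        rw [Set.mem_uIcc] at h3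
        constructor
        · rcases h3 with ⟨ha, _⟩ | ⟨ha, _⟩
          · linarith [h1.1]
          · linarith [h2.1]
        · rcases h3 with ⟨_, hb⟩ | ⟨_, hb⟩
          · linarith [h2.2]
          · linarith [h1.2]
      have hb := incr_bound (F1 s') (fun s y => F2 s s' y)
        (fun y hy s => hdF1 y hy s s') w (γ t) hbox (fun s => cC F2 s s')
        (fun s ξ hξ => abs_le_sSup_cube (hF2c s s') (openCube_subset_cube (hbox ξ hξ)))
      refine le_trans hb ?_
      have hterm : ∀ s : Idx K, cC F2 s s' * |γ t s - w s| ≤ c * (t * |v s|) := by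
        intro s
        have hγw : γ t s - w s = t * v s := by simp only [hγ]; ring
        rw [hγw, abs_mul, abs_of_nonneg ht.1]
        by_cases hvs : v s = 0
        · simp [hvs]
        · have h1 : cC F2 s s' ≤ c := hc s s'
            (by simpa [hv, sub_ne_zero] using hvs) (by simpa [hv, sub_ne_zero] using hvs')
          have h2 : (0:ℝ) ≤ t * |v s| := mul_nonneg ht.1 (abs_nonneg _)
          exact mul_le_mul_of_nonneg_right h1 h2
      calc ∑ s, cC F2 s s' * |γ t s - w s| ≤ ∑ s, c * (t * |v s|) :=
            Finset.sum_le_sum fun s _ => hterm s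
        _ = c * t * L := by rw [hLdef, Finset.mul_sum]; apply Finset.sum_congr rfl; intros; ring
    have hDdiff : D t - Φ = ∑ s', v s' * (F1 s' (γ t) - F1 s' w) := by
      rw [hD, hΦ, ← Finset.sum_sub_distrib]
      apply Finset.sum_congr rfl; intros; ring
    rw [hDdiff]
    have hctL : 0 ≤ c * t * L := mul_nonneg (mul_nonneg hc0 ht.1) hL0
    calc |∑ s', v s' * (F1 s' (γ t) - F1 s' w)|
        ≤ ∑ s', |v s' * (F1 s' (γ t) - F1 s' w)| := Finset.abs_sum_le_sum_abs _ _
      _ ≤ ∑ s', |v s'| * (c * t * L) := by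
          apply Finset.sum_le_sum
          intro s' _
          rw [abs_mul]
          by_cases hvs' : v s' = 0
          · simp [hvs']
          · exact mul_le_mul_of_nonneg_left (hstep s' hvs') (abs_nonneg _)
      _ = c * t * L ^ 2 := by rw [← Finset.sum_mul, ← hLdef]; ring
  have hband : ∀ t ∈ Set.Ico (0:ℝ) 1, |F (γ t) - F w - t * Φ| ≤ c * L ^ 2 / 2 * t ^ 2 := by
    intro t ht
    have hup : ∀ sgn : ℝ, sgn = 1 ∨ sgn = -1 →
        sgn * (F (γ t) - F w - t * Φ) ≤ c * L ^ 2 / 2 * t ^ 2 := by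
      intro sgn hsgn
      set q : ℝ → ℝ := fun u => sgn * (F (γ u) - F w - u * Φ) - c * L ^ 2 / 2 * u ^ 2 with hq
      have hqd : ∀ u ∈ Set.Ico (0:ℝ) 1,
          HasDerivAt q (sgn * (D u - Φ) - c * L ^ 2 / 2 * (2 * u)) u := by
        intro u hu
        have h1 := hasd u hu
        have h2 : HasDerivAt (fun u' : ℝ => sgn * (F (γ u') - F w - u' * Φ))
            (sgn * (D u - Φ)) u :=
          ((h1.sub_const (F w)).sub (hasDerivAt_mul_const Φ)).const_mul sgn
        have h3 : HasDerivAt (fun u' : ℝ => c * L ^ 2 / 2 * u' ^ 2)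
            (c * L ^ 2 / 2 * (2 * u)) u := by
          simpa using (hasDerivAt_pow 2 u).const_mul (c * L ^ 2 / 2)
        exact h2.sub h3
      have hanti : AntitoneOn q (Set.Ico (0:ℝ) 1) := by
        apply antitoneOn_of_deriv_nonpos (convex_Ico 0 1)
        · intro u hu; exact (hqd u hu).continuousAt.continuousWithinAt
        · intro u hu
          rw [interior_Ico] at hu
          exact (hqd u ⟨hu.1.le, hu.2⟩).differentiableAt.differentiableWithinAt
        · intro u hu
          rw [interior_Ico] at hu
          have hu' : u ∈ Set.Ico (0:ℝ) 1 := ⟨hu.1.le, hu.2⟩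
          rw [(hqd u hu').deriv]
          have h4 := hvar u hu'
          have h5 : sgn * (D u - Φ) ≤ c * u * L ^ 2 := by
            have h6 := le_abs_self (D u - Φ)
            have h7 := neg_abs_le (D u - Φ)
            rcases hsgn with h | h <;> subst h <;> nlinarith
          have h8 : c * L ^ 2 / 2 * (2 * u) = c * u * L ^ 2 := by ring
          rw [h8]
          linarith
      have hq0 : q 0 = 0 := by simp [hq, hγ0]
      have hqt := hanti (Set.left_mem_Ico.2 one_pos) ht ht.1
      rw [hq0] at hqt
      simp only [hq] at hqt
      linarith
    have h1 := hup 1 (Or.inl rfl)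
    have h2 := hup (-1) (Or.inr rfl)
    rw [abs_le]
    constructor <;> linarith
  have hcubemem : ∀ t ∈ Set.Icc (0:ℝ) 1, γ t ∈ cube K := by
    intro t ht
    rcases eq_or_lt_of_le ht.2 with h | h
    · rw [h, hγ1]; exact hx
    · exact openCube_subset_cube (hsegγ t ⟨ht.1, h⟩)
  have hψc : ContinuousOn (fun t => F (γ t)) (Set.Icc (0:ℝ) 1) :=
    hFc.comp hγc.continuousOn hcubemem
  have hne : (nhdsWithin (1:ℝ) (Set.Ioo (0:ℝ) 1)).NeBot := by
    apply mem_closure_iff_nhdsWithin_neBot.mp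
    rw [closure_Ioo (by norm_num : (0:ℝ) ≠ 1)]
    exact Set.right_mem_Icc.2 zero_le_one
  have h1 : Filter.Tendsto (fun t => F (γ t)) (nhdsWithin 1 (Set.Ioo (0:ℝ) 1)) (nhds (F x)) := by
    have h2 := (hψc 1 (Set.right_mem_Icc.2 zero_le_one)).mono Set.Ioo_subset_Icc_self
    rw [ContinuousWithinAt, hγ1] at h2
    exact h2
  have hT1 : Filter.Tendsto (fun t => |F (γ t) - F w - t * Φ|)
      (nhdsWithin 1 (Set.Ioo (0:ℝ) 1)) (nhds |F x - F w - 1 * Φ|) := by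
    have h3 : Filter.Tendsto (fun t : ℝ => t * Φ) (nhdsWithin 1 (Set.Ioo (0:ℝ) 1))
        (nhds (1 * Φ)) :=
      ((continuous_id.mul continuous_const).tendsto 1).mono_left nhdsWithin_le_nhds
    exact ((h1.sub_const (F w)).sub h3).abs
  have hT2 : Filter.Tendsto (fun t : ℝ => c * L ^ 2 / 2 * t ^ 2)
      (nhdsWithin 1 (Set.Ioo (0:ℝ) 1)) (nhds (c * L ^ 2 / 2 * 1 ^ 2)) :=
    ((continuous_const.mul (continuous_pow 2)).tendsto 1).mono_left nhdsWithin_le_nhds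
  have hfin := le_of_tendsto_of_tendsto hT1 hT2
    (eventually_mem_nhdsWithin.mono fun t ht => hband t ⟨ht.1.le, ht.2⟩)
  calc |F x - F w - ∑ s, (x s - w s) * F1 s w| = |F x - F w - 1 * Φ| := by
        rw [hΦ, one_mul]
    _ ≤ c * L ^ 2 / 2 * 1 ^ 2 := hfin
    _ = c / 2 * (∑ s, |x s - w s|) ^ 2 := by rw [hLdef]; ring

end Meta
namespace Meta

variable {n : ℕ} {K : Fin n → ℕ}

lemma U1_mem_cube {w : Vec K} (hw : w ∈ cube K) (s₀ : Idx K) : U1 w s₀ ∈ cube K := by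
  intro s
  dsimp [U1]
  split_ifs
  · exact ⟨zero_le_one, le_refl 1⟩
  · exact ⟨le_refl 0, zero_le_one⟩
  · exact hw s

lemma step_interior {F : Vec K → ℝ} {F1 : Idx K → Vec K → ℝ} {F2 : Idx K → Idx K → Vec K → ℝ}
    (hsm : SmoothData F F1 F2) (hK : ∀ i, 1 ≤ K i) (w : Vec K) (hw : w ∈ openCube K)
    (k : Fin n) :
    |∑ ℓ, w ⟨k, ℓ⟩ * F (U1 w ⟨k, ℓ⟩) - (∑ ℓ, w ⟨k, ℓ⟩) * F w| ≤
      |1 - ∑ ℓ, w ⟨k, ℓ⟩| * (∑ ℓ' : Fin (K k), bC F1 ⟨k, ℓ'⟩)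
      + (∑ ℓ, w ⟨k, ℓ⟩) * ((⨆ ℓ : Fin (K k), ⨆ ℓ' : Fin (K k), cC F2 ⟨k, ℓ⟩ ⟨k, ℓ'⟩) / 2)
        * (1 + ∑ ℓ, w ⟨k, ℓ⟩) ^ 2 := by
  classical
  have hFc := hsm.1
  have hF1c := hsm.2.1
  have hF2c := hsm.2.2.1
  haveI hne : Nonempty (Fin (K k)) := Fin.pos_iff_nonempty.mp (hK k)
  set c : ℝ := ⨆ ℓ : Fin (K k), ⨆ ℓ' : Fin (K k), cC F2 ⟨k, ℓ⟩ ⟨k, ℓ'⟩ with hcdef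
  have hcle : ∀ ℓ ℓ' : Fin (K k), cC F2 ⟨k, ℓ⟩ ⟨k, ℓ'⟩ ≤ c := by
    intro ℓ ℓ'
    have h1 : cC F2 ⟨k, ℓ⟩ ⟨k, ℓ'⟩ ≤ ⨆ ℓ'' : Fin (K k), cC F2 ⟨k, ℓ⟩ ⟨k, ℓ''⟩ :=
      le_ciSup (f := fun ℓ'' : Fin (K k) => cC F2 ⟨k, ℓ⟩ ⟨k, ℓ''⟩)
        (Set.Finite.bddAbove (Set.finite_range _)) ℓ'
    exact le_trans h1 (le_ciSup
      (f := fun ℓ'' : Fin (K k) => ⨆ ℓ''' : Fin (K k), cC F2 ⟨k, ℓ''⟩ ⟨k, ℓ'''⟩)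
      (Set.Finite.bddAbove (Set.finite_range _)) ℓ)
  obtain ⟨ℓ0⟩ := hne
  have hc0 : 0 ≤ c := le_trans (sSup_cube_nonneg (hF2c ⟨k, ℓ0⟩ ⟨k, ℓ0⟩)) (hcle ℓ0 ℓ0)
  set σ : ℝ := ∑ ℓ, w ⟨k, ℓ⟩ with hσdef
  have hσ0 : 0 ≤ σ := Finset.sum_nonneg fun a _ => (hw ⟨k, a⟩).1.le
  set Φ : Fin (K k) → ℝ := fun ℓ => ∑ s, (U1 w ⟨k, ℓ⟩ s - w s) * F1 s w with hΦdef
  -- per-ℓ Taylor bound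
  have hR : ∀ ℓ : Fin (K k), |F (U1 w ⟨k, ℓ⟩) - F w - Φ ℓ| ≤ c / 2 * (1 + σ) ^ 2 := by
    intro ℓ
    set x : Vec K := U1 w ⟨k, ℓ⟩ with hxdef
    have hxc : x ∈ cube K := U1_mem_cube (openCube_subset_cube hw) _
    have hseg : ∀ t ∈ Set.Ico (0:ℝ) 1, (fun s => w s + t * (x s - w s)) ∈ openCube K := by
      intro t ht s
      have h1 := hw s
      have h2 := hxc s
      show 0 < w s + t * (x s - w s) ∧ w s + t * (x s - w s) < 1
      constructor
      · nlinarith [mul_pos (sub_pos.2 ht.2) h1.1, mul_nonneg ht.1 h2.1]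
      · nlinarith [mul_pos (sub_pos.2 ht.2) (sub_pos.2 h1.2),
          mul_nonneg ht.1 (sub_nonneg.2 h2.2)]
    have hcx : ∀ s s', x s ≠ w s → x s' ≠ w s' → cC F2 s s' ≤ c := by
      intro s s' h h'
      have hs1 : s.1 = k := by
        by_contra hcon
        exact h (if_neg hcon)
      have hs1' : s'.1 = k := by
        by_contra hcon
        exact h' (if_neg hcon)
      obtain ⟨i, a⟩ := s
      obtain ⟨i', a'⟩ := s'
      dsimp at hs1 hs1'
      subst hs1; subst hs1'
      exact hcle a a'
    have htl := taylor_seg hsm w x hw hseg hxc c hc0 hcx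
    have hLle : ∑ s, |x s - w s| ≤ 1 + σ := by
      rw [← Finset.univ_sigma_univ, Finset.sum_sigma]
      rw [Finset.sum_eq_single_of_mem k (Finset.mem_univ k) ?off]
      case off =>
        intro i _ hik
        apply Finset.sum_eq_zero
        intro a _
        have : x ⟨i, a⟩ = w ⟨i, a⟩ := if_neg hik
        rw [this, sub_self, abs_zero]
      have hxa : ∀ a : Fin (K k), x ⟨k, a⟩ = if a = ℓ then 1 else 0 := by
        intro a
        rw [hxdef]
        show (if (⟨k, a⟩ : Idx K).1 = (⟨k, ℓ⟩ : Idx K).1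
            then (if (⟨k, a⟩ : Idx K) = ⟨k, ℓ⟩ then (1:ℝ) else 0) else w ⟨k, a⟩)
          = if a = ℓ then 1 else 0
        rw [if_pos rfl]
        by_cases h : a = ℓ
        · subst h; rw [if_pos rfl, if_pos rfl]
        · rw [if_neg h, if_neg (by simp [Sigma.mk.inj_iff, h])]
      calc ∑ a : Fin (K k), |x ⟨k, a⟩ - w ⟨k, a⟩|
          ≤ ∑ a : Fin (K k), ((if a = ℓ then 1 else 0) + w ⟨k, a⟩) := by
            apply Finset.sum_le_sum
            intro a _
            rw [hxa a]
            have h1 := (hw ⟨k, a⟩).1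
            rw [abs_le]
            constructor <;> split_ifs <;> linarith
        _ = 1 + σ := by
            rw [Finset.sum_add_distrib, hσdef]
            congr 1
            simp
    exact le_trans htl (by
      have hL0' : (0:ℝ) ≤ ∑ s, |x s - w s| := Finset.sum_nonneg fun s _ => abs_nonneg _
      have := pow_le_pow_left₀ hL0' hLle 2
      nlinarith)
  -- the first-order term
  have hΦsum : ∑ ℓ, w ⟨k, ℓ⟩ * Φ ℓ = (1 - σ) * ∑ ℓ' : Fin (K k), w ⟨k, ℓ'⟩ * F1 ⟨k, ℓ'⟩ w := by
    have h1 : ∑ ℓ, w ⟨k, ℓ⟩ * Φ ℓ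
        = ∑ s : Idx K, (∑ ℓ, w ⟨k, ℓ⟩ * (U1 w ⟨k, ℓ⟩ s - w s)) * F1 s w := by
      simp only [hΦdef, Finset.mul_sum]
      rw [Finset.sum_comm]
      apply Finset.sum_congr rfl
      intro s _
      rw [Finset.sum_mul]
      apply Finset.sum_congr rfl
      intros; ring
    rw [h1, ← Finset.univ_sigma_univ, Finset.sum_sigma]
    rw [Finset.sum_eq_single_of_mem k (Finset.mem_univ k) ?off2]
    case off2 =>
      intro i _ hik
      apply Finset.sum_eq_zero
      intro a _
      have hz : ∀ ℓ : Fin (K k), U1 w ⟨k, ℓ⟩ ⟨i, a⟩ - w ⟨i, a⟩ = 0 := by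
        intro ℓ
        rw [show U1 w ⟨k, ℓ⟩ ⟨i, a⟩ = w ⟨i, a⟩ from if_neg hik, sub_self]
      simp only [hz, mul_zero]
      simp
    have h3 : ∀ a : Fin (K k), (∑ ℓ, w ⟨k, ℓ⟩ * (U1 w ⟨k, ℓ⟩ ⟨k, a⟩ - w ⟨k, a⟩))
        = w ⟨k, a⟩ - σ * w ⟨k, a⟩ := by
      intro a
      have hxa : ∀ ℓ : Fin (K k), U1 w ⟨k, ℓ⟩ ⟨k, a⟩ = if a = ℓ then 1 else 0 := by
        intro ℓ
        show (if (⟨k, a⟩ : Idx K).1 = (⟨k, ℓ⟩ : Idx K).1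
            then (if (⟨k, a⟩ : Idx K) = ⟨k, ℓ⟩ then (1:ℝ) else 0) else w ⟨k, a⟩)
          = if a = ℓ then 1 else 0
        rw [if_pos rfl]
        by_cases h : a = ℓ
        · subst h; rw [if_pos rfl, if_pos rfl]
        · rw [if_neg h, if_neg (by simp [Sigma.mk.inj_iff, h])]
      simp only [hxa, mul_sub]
      rw [Finset.sum_sub_distrib]
      congr 1
      · simp [mul_ite]
      · rw [← Finset.sum_mul, hσdef]
    calc ∑ a : Fin (K k), (∑ ℓ, w ⟨k, ℓ⟩ * (U1 w ⟨k, ℓ⟩ ⟨k, a⟩ - w ⟨k, a⟩)) * F1 ⟨k, a⟩ w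
        = ∑ a : Fin (K k), (w ⟨k, a⟩ - σ * w ⟨k, a⟩) * F1 ⟨k, a⟩ w := by
          apply Finset.sum_congr rfl
          intro a _
          rw [h3 a]
      _ = (1 - σ) * ∑ ℓ' : Fin (K k), w ⟨k, ℓ'⟩ * F1 ⟨k, ℓ'⟩ w := by
          rw [Finset.mul_sum]
          apply Finset.sum_congr rfl
          intros; ring
  have habs1 : |∑ ℓ, w ⟨k, ℓ⟩ * Φ ℓ| ≤ |1 - σ| * ∑ ℓ' : Fin (K k), bC F1 ⟨k, ℓ'⟩ := by
    rw [hΦsum, abs_mul]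
    apply mul_le_mul_of_nonneg_left ?_ (abs_nonneg _)
    calc |∑ ℓ' : Fin (K k), w ⟨k, ℓ'⟩ * F1 ⟨k, ℓ'⟩ w|
        ≤ ∑ ℓ' : Fin (K k), |w ⟨k, ℓ'⟩ * F1 ⟨k, ℓ'⟩ w| := Finset.abs_sum_le_sum_abs _ _
      _ ≤ ∑ ℓ' : Fin (K k), bC F1 ⟨k, ℓ'⟩ := by
          apply Finset.sum_le_sum
          intro a _
          rw [abs_mul]
          have h1 : |w ⟨k, a⟩| ≤ 1 := by
            rw [abs_of_nonneg (hw ⟨k, a⟩).1.le]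
            exact (hw ⟨k, a⟩).2.le
          have h2 : |F1 ⟨k, a⟩ w| ≤ bC F1 ⟨k, a⟩ :=
            abs_le_sSup_cube (hF1c ⟨k, a⟩) (openCube_subset_cube hw)
          calc |w ⟨k, a⟩| * |F1 ⟨k, a⟩ w| ≤ 1 * |F1 ⟨k, a⟩ w| :=
                mul_le_mul_of_nonneg_right h1 (abs_nonneg _)
            _ = |F1 ⟨k, a⟩ w| := one_mul _
            _ ≤ bC F1 ⟨k, a⟩ := h2
  have hdecomp : ∑ ℓ, w ⟨k, ℓ⟩ * F (U1 w ⟨k, ℓ⟩) - σ * F w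
      = ∑ ℓ, w ⟨k, ℓ⟩ * (F (U1 w ⟨k, ℓ⟩) - F w - Φ ℓ) + ∑ ℓ, w ⟨k, ℓ⟩ * Φ ℓ := by
    rw [hσdef, Finset.sum_mul, ← Finset.sum_sub_distrib, ← Finset.sum_add_distrib]
    apply Finset.sum_congr rfl
    intros; ring
  calc |∑ ℓ, w ⟨k, ℓ⟩ * F (U1 w ⟨k, ℓ⟩) - σ * F w|
      = |∑ ℓ, w ⟨k, ℓ⟩ * (F (U1 w ⟨k, ℓ⟩) - F w - Φ ℓ) + ∑ ℓ, w ⟨k, ℓ⟩ * Φ ℓ| := by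
        rw [hdecomp]
    _ ≤ |∑ ℓ, w ⟨k, ℓ⟩ * (F (U1 w ⟨k, ℓ⟩) - F w - Φ ℓ)| + |∑ ℓ, w ⟨k, ℓ⟩ * Φ ℓ| := abs_add_le _ _
    _ ≤ σ * (c / 2) * (1 + σ) ^ 2 + |1 - σ| * ∑ ℓ' : Fin (K k), bC F1 ⟨k, ℓ'⟩ := by
        apply add_le_add ?_ habs1
        calc |∑ ℓ, w ⟨k, ℓ⟩ * (F (U1 w ⟨k, ℓ⟩) - F w - Φ ℓ)|
            ≤ ∑ ℓ, |w ⟨k, ℓ⟩ * (F (U1 w ⟨k, ℓ⟩) - F w - Φ ℓ)| := Finset.abs_sum_le_sum_abs _ _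
          _ ≤ ∑ ℓ, w ⟨k, ℓ⟩ * (c / 2 * (1 + σ) ^ 2) := by
              apply Finset.sum_le_sum
              intro a _
              rw [abs_mul, abs_of_nonneg (hw ⟨k, a⟩).1.le]
              exact mul_le_mul_of_nonneg_left (hR a) (hw ⟨k, a⟩).1.le
          _ = σ * (c / 2) * (1 + σ) ^ 2 := by
              rw [← Finset.sum_mul, hσdef]; ring
    _ = |1 - σ| * (∑ ℓ' : Fin (K k), bC F1 ⟨k, ℓ'⟩) + σ * (c / 2) * (1 + σ) ^ 2 := by ring

end Meta
namespace Meta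

variable {n : ℕ} {K : Fin n → ℕ}

lemma stepC {F : Vec K → ℝ} {F1 : Idx K → Vec K → ℝ} {F2 : Idx K → Idx K → Vec K → ℝ}
    (hsm : SmoothData F F1 F2) (hK : ∀ i, 1 ≤ K i) (w : Vec K) (hw : w ∈ cube K) (k : Fin n) :
    |∑ ℓ, w ⟨k, ℓ⟩ * F (U1 w ⟨k, ℓ⟩) - (∑ ℓ, w ⟨k, ℓ⟩) * F w| ≤
      |1 - ∑ ℓ, w ⟨k, ℓ⟩| * (∑ ℓ' : Fin (K k), bC F1 ⟨k, ℓ'⟩)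
      + (∑ ℓ, w ⟨k, ℓ⟩) * ((⨆ ℓ : Fin (K k), ⨆ ℓ' : Fin (K k), cC F2 ⟨k, ℓ⟩ ⟨k, ℓ'⟩) / 2)
        * (1 + ∑ ℓ, w ⟨k, ℓ⟩) ^ 2 := by
  have hFc := hsm.1
  set path : ℝ → Vec K := fun θ => fun s => (1 - θ) * w s + θ * (1 / 2) with hpath
  have hpath0 : path 0 = w := funext fun s => by
    show (1 - (0:ℝ)) * w s + 0 * (1 / 2) = w s; ring
  have hmem : ∀ θ ∈ Set.Ioo (0:ℝ) 1, path θ ∈ openCube K := by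
    intro θ hθ s
    have h1 := hw s
    show 0 < (1 - θ) * w s + θ * (1 / 2) ∧ (1 - θ) * w s + θ * (1 / 2) < 1
    constructor
    · nlinarith [mul_nonneg (by linarith [hθ.2] : (0:ℝ) ≤ 1 - θ) h1.1, hθ.1]
    · nlinarith [mul_nonneg (by linarith [hθ.2] : (0:ℝ) ≤ 1 - θ) (by linarith [h1.2] :
        (0:ℝ) ≤ 1 - w s), hθ.2, hθ.1]
  have hmemc : ∀ θ ∈ Set.Icc (0:ℝ) 1, path θ ∈ cube K := by
    intro θ hθ s
    have h1 := hw s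
    show 0 ≤ (1 - θ) * w s + θ * (1 / 2) ∧ (1 - θ) * w s + θ * (1 / 2) ≤ 1
    constructor
    · nlinarith [mul_nonneg (by linarith [hθ.2] : (0:ℝ) ≤ 1 - θ) h1.1, hθ.1]
    · nlinarith [mul_nonneg (by linarith [hθ.2] : (0:ℝ) ≤ 1 - θ) (by linarith [h1.2] :
        (0:ℝ) ≤ 1 - w s), hθ.2, hθ.1]
  have hpathc : Continuous path := by
    apply continuous_pi
    intro s
    exact ((continuous_const.sub continuous_id).mul continuous_const).add
      (continuous_id.mul continuous_const)
  haveI hne : (nhdsWithin (0:ℝ) (Set.Ioo (0:ℝ) 1)).NeBot := by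
    apply mem_closure_iff_nhdsWithin_neBot.mp
    rw [closure_Ioo (by norm_num : (0:ℝ) ≠ 1)]
    exact Set.left_mem_Icc.2 zero_le_one
  have hcoord : ∀ s : Idx K, Filter.Tendsto (fun θ => path θ s)
      (nhdsWithin 0 (Set.Ioo (0:ℝ) 1)) (nhds (w s)) := by
    intro s
    have h1 : Filter.Tendsto (fun θ => path θ s) (nhds 0) (nhds (path 0 s)) :=
      ((continuous_apply s).comp hpathc).tendsto 0
    rw [hpath0] at h1
    exact h1.mono_left nhdsWithin_le_nhds
  have hσt : Filter.Tendsto (fun θ => ∑ ℓ, path θ ⟨k, ℓ⟩)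
      (nhdsWithin 0 (Set.Ioo (0:ℝ) 1)) (nhds (∑ ℓ, w ⟨k, ℓ⟩)) :=
    tendsto_finset_sum _ fun ℓ _ => hcoord ⟨k, ℓ⟩
  have hFt : Filter.Tendsto (fun θ => F (path θ)) (nhdsWithin 0 (Set.Ioo (0:ℝ) 1))
      (nhds (F w)) := by
    have h1 : ContinuousWithinAt (fun θ => F (path θ)) (Set.Icc 0 1) 0 :=
      (hFc.comp hpathc.continuousOn hmemc) 0 (Set.left_mem_Icc.2 zero_le_one)
    have h2 : Filter.Tendsto (fun θ => F (path θ)) (nhdsWithin 0 (Set.Ioo (0:ℝ) 1))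
        (nhds (F (path 0))) := h1.mono Set.Ioo_subset_Icc_self
    rwa [hpath0] at h2
  have hFU : ∀ ℓ : Fin (K k), Filter.Tendsto (fun θ => F (U1 (path θ) ⟨k, ℓ⟩))
      (nhdsWithin 0 (Set.Ioo (0:ℝ) 1)) (nhds (F (U1 w ⟨k, ℓ⟩))) := by
    intro ℓ
    have hU1c : Continuous (fun θ => U1 (path θ) ⟨k, ℓ⟩) := by
      apply continuous_pi
      intro s
      dsimp [U1]
      split_ifs
      · exact continuous_const
      · exact continuous_const
      · exact (continuous_apply s).comp hpathc
    have h1 : ContinuousWithinAt (fun θ => F (U1 (path θ) ⟨k, ℓ⟩)) (Set.Icc 0 1) 0 :=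
      (hFc.comp hU1c.continuousOn
        (fun θ hθ => U1_mem_cube (hmemc θ hθ) ⟨k, ℓ⟩)) 0 (Set.left_mem_Icc.2 zero_le_one)
    have h2 : Filter.Tendsto (fun θ => F (U1 (path θ) ⟨k, ℓ⟩))
        (nhdsWithin 0 (Set.Ioo (0:ℝ) 1)) (nhds (F (U1 (path 0) ⟨k, ℓ⟩))) :=
      h1.mono Set.Ioo_subset_Icc_self
    rwa [hpath0] at h2
  have hT1 : Filter.Tendsto
      (fun θ => |∑ ℓ, path θ ⟨k, ℓ⟩ * F (U1 (path θ) ⟨k, ℓ⟩)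
        - (∑ ℓ, path θ ⟨k, ℓ⟩) * F (path θ)|)
      (nhdsWithin 0 (Set.Ioo (0:ℝ) 1))
      (nhds |∑ ℓ, w ⟨k, ℓ⟩ * F (U1 w ⟨k, ℓ⟩) - (∑ ℓ, w ⟨k, ℓ⟩) * F w|) := by
    apply Filter.Tendsto.abs
    exact (tendsto_finset_sum _ fun ℓ _ => (hcoord ⟨k, ℓ⟩).mul (hFU ℓ)).sub (hσt.mul hFt)
  have hT2 : Filter.Tendsto
      (fun θ => |1 - ∑ ℓ, path θ ⟨k, ℓ⟩| * (∑ ℓ' : Fin (K k), bC F1 ⟨k, ℓ'⟩)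
        + (∑ ℓ, path θ ⟨k, ℓ⟩)
          * ((⨆ ℓ : Fin (K k), ⨆ ℓ' : Fin (K k), cC F2 ⟨k, ℓ⟩ ⟨k, ℓ'⟩) / 2)
          * (1 + ∑ ℓ, path θ ⟨k, ℓ⟩) ^ 2)
      (nhdsWithin 0 (Set.Ioo (0:ℝ) 1))
      (nhds (|1 - ∑ ℓ, w ⟨k, ℓ⟩| * (∑ ℓ' : Fin (K k), bC F1 ⟨k, ℓ'⟩)
        + (∑ ℓ, w ⟨k, ℓ⟩) * ((⨆ ℓ : Fin (K k), ⨆ ℓ' : Fin (K k), cC F2 ⟨k, ℓ⟩ ⟨k, ℓ'⟩) / 2)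
          * (1 + ∑ ℓ, w ⟨k, ℓ⟩) ^ 2)) := by
    exact (((tendsto_const_nhds.sub hσt).abs.mul tendsto_const_nhds).add
      (((hσt.mul tendsto_const_nhds).mul ((tendsto_const_nhds.add hσt).pow 2))))
  exact le_of_tendsto_of_tendsto hT1 hT2
    (eventually_mem_nhdsWithin.mono fun θ hθ => step_interior hsm hK (path θ) (hmem θ hθ) k)

end Meta
namespace Meta

variable {n : ℕ} {K : Fin n → ℕ}

lemma Qy_nonneg {y : Vec K} (hy : y ∈ cube K) (z : Conf K) : 0 ≤ Qy y z :=
  Finset.prod_nonneg fun i _ => (hy ⟨i, z i⟩).1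

lemma Qy_sum_one {y : Vec K} (hy : ∀ i, ∑ ℓ : Fin (K i), y ⟨i, ℓ⟩ = 1) :
    ∑ z : Conf K, Qy y z = 1 := by
  classical
  have h1 : ∏ i, ∑ ℓ : Fin (K i), y ⟨i, ℓ⟩ = ∑ z : Conf K, ∏ i, y ⟨i, z i⟩ :=
    Fintype.prod_sum (fun i ℓ => y ⟨i, ℓ⟩)
  have h2 : ∑ z : Conf K, Qy y z = ∏ i, ∑ ℓ : Fin (K i), y ⟨i, ℓ⟩ := by
    rw [h1]
    apply Finset.sum_congr rfl
    intros; rfl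
  rw [h2]
  simp [hy]

lemma Qy_update (y : Vec K) (z : Conf K) (m : Fin n) (a : Fin (K m)) :
    Qy y (Function.update z m a) * y ⟨m, z m⟩ = Qy y z * y ⟨m, a⟩ := by
  classical
  have h1 : ∀ zz : Conf K,
      Qy y zz = y ⟨m, zz m⟩ * ∏ i ∈ Finset.univ.erase m, y ⟨i, zz i⟩ := by
    intro zz
    rw [Qy]
    exact (Finset.mul_prod_erase Finset.univ _ (Finset.mem_univ m)).symm
  rw [h1, h1]
  have h2 : ∏ i ∈ Finset.univ.erase m, y ⟨i, Function.update z m a i⟩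
      = ∏ i ∈ Finset.univ.erase m, y ⟨i, z i⟩ := by
    apply Finset.prod_congr rfl
    intro i hi
    rw [Function.update_of_ne (Finset.ne_of_mem_erase hi)]
  rw [h2, Function.update_self]
  ring

lemma Qy_split (y : Vec K) (hy : ∀ i, ∑ ℓ : Fin (K i), y ⟨i, ℓ⟩ = 1) (m : Fin n)
    (g : Conf K → ℝ) :
    ∑ z : Conf K, Qy y z * g z
      = ∑ z : Conf K, Qy y z * ∑ a, y ⟨m, a⟩ * g (Function.update z m a) := by
  classical
  have hrhs : ∑ z : Conf K, Qy y z * ∑ a, y ⟨m, a⟩ * g (Function.update z m a)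
      = ∑ p : Conf K × Fin (K m), Qy y p.1 * (y ⟨m, p.2⟩ * g (Function.update p.1 m p.2)) := by
    rw [Fintype.sum_prod_type]
    apply Finset.sum_congr rfl
    intro z _
    rw [Finset.mul_sum]
  set φ : Conf K × Fin (K m) → Conf K × Fin (K m) :=
    fun p => (Function.update p.1 m p.2, p.1 m) with hφ
  have hinv : Function.Involutive φ := by
    intro p
    have c1 : Function.update (Function.update p.1 m p.2) m ((Function.update p.1 m p.2) m
        |> fun _ => p.1 m) = p.1 := by
      rw [Function.update_idem, Function.update_eq_self]
    simp only [hφ]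
    rw [Prod.ext_iff]
    constructor
    · show Function.update (Function.update p.1 m p.2) m (p.1 m) = p.1
      rw [Function.update_idem, Function.update_eq_self]
    · show (Function.update p.1 m p.2) m = p.2
      rw [Function.update_self]
  have hGφ : ∀ p : Conf K × Fin (K m),
      Qy y (φ p).1 * (y ⟨m, (φ p).2⟩ * g (Function.update (φ p).1 m (φ p).2))
      = Qy y p.1 * y ⟨m, p.2⟩ * g p.1 := by
    intro p
    simp only [hφ]
    rw [Function.update_idem, Function.update_eq_self, ← mul_assoc,
      Qy_update y p.1 m p.2]
  rw [hrhs, ← Function.Bijective.sum_comp hinv.bijective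
    (fun p => Qy y p.1 * (y ⟨m, p.2⟩ * g (Function.update p.1 m p.2)))]
  have hfin : ∑ p : Conf K × Fin (K m),
      Qy y (φ p).1 * (y ⟨m, (φ p).2⟩ * g (Function.update (φ p).1 m (φ p).2))
      = ∑ z : Conf K, Qy y z * g z := by
    calc ∑ p : Conf K × Fin (K m),
        Qy y (φ p).1 * (y ⟨m, (φ p).2⟩ * g (Function.update (φ p).1 m (φ p).2))
        = ∑ p : Conf K × Fin (K m), Qy y p.1 * y ⟨m, p.2⟩ * g p.1 :=
          Finset.sum_congr rfl fun p _ => hGφ p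
      _ = ∑ z : Conf K, ∑ a : Fin (K m), Qy y z * y ⟨m, a⟩ * g z := by
          rw [Fintype.sum_prod_type]
      _ = ∑ z : Conf K, Qy y z * g z := by
          apply Finset.sum_congr rfl
          intro z _
          have h3 : ∑ a : Fin (K m), Qy y z * y ⟨m, a⟩ * g z
              = (Qy y z * g z) * ∑ a : Fin (K m), y ⟨m, a⟩ := by
            rw [Finset.mul_sum]
            apply Finset.sum_congr rfl
            intros; ring
          rw [h3, hy m, mul_one]
  exact hfin.symm

/-- The hybrid point: one-hot in the first `m` rows, `y` in the rest. -/
def hyb (y : Vec K) (z : Conf K) (m : ℕ) : Vec K :=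
  fun s => if (s.1 : ℕ) < m then onehot z s else y s

lemma hyb_zero (y : Vec K) (z : Conf K) : hyb y z 0 = y :=
  funext fun s => if_neg (Nat.not_lt_zero _)

lemma hyb_top (y : Vec K) (z : Conf K) : hyb y z n = onehot z :=
  funext fun s => if_pos s.1.isLt

lemma hyb_mem_cube {y : Vec K} (hy : y ∈ cube K) (z : Conf K) (m : ℕ) :
    hyb y z m ∈ cube K := by
  intro s
  dsimp [hyb, onehot]
  split_ifs
  · exact ⟨zero_le_one, le_refl 1⟩
  · exact ⟨le_refl 0, zero_le_one⟩
  · exact hy s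

lemma hyb_row {y : Vec K} {z : Conf K} {m : ℕ} {k : Fin n} (h : ¬ ((k : ℕ) < m))
    (a : Fin (K k)) : hyb y z m ⟨k, a⟩ = y ⟨k, a⟩ := if_neg h

lemma hyb_succ (y : Vec K) (z : Conf K) (m : Fin n) (a : Fin (K m)) :
    hyb y (Function.update z m a) ((m : ℕ) + 1) = U1 (hyb y z m) ⟨m, a⟩ := by
  classical
  funext s
  obtain ⟨i, b⟩ := s
  by_cases hi : i = m
  · subst hi
    show (if (i : ℕ) < (i : ℕ) + 1 then onehot (Function.update z i a) ⟨i, b⟩ else y ⟨i, b⟩)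
      = if (i = i) then (if (⟨i, b⟩ : Idx K) = ⟨i, a⟩ then 1 else 0) else hyb y z i ⟨i, b⟩
    rw [if_pos (Nat.lt_succ_self _), if_pos rfl]
    show (if Function.update z i a i = b then (1:ℝ) else 0) = _
    rw [Function.update_self]
    by_cases hab : a = b
    · subst hab
      rw [if_pos rfl, if_pos rfl]
    · rw [if_neg hab, if_neg (by simp [Sigma.mk.inj_iff]; exact fun h => hab h.symm)]
  · show (if (i : ℕ) < (m : ℕ) + 1 then onehot (Function.update z m a) ⟨i, b⟩ else y ⟨i, b⟩)
      = if (i = m) then (if (⟨i, b⟩ : Idx K) = ⟨m, a⟩ then 1 else 0) else hyb y z m ⟨i, b⟩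
    rw [if_neg hi]
    have hup : onehot (Function.update z m a) ⟨i, b⟩ = onehot z ⟨i, b⟩ := by
      show (if Function.update z m a i = b then (1:ℝ) else 0) = if z i = b then 1 else 0
      rw [Function.update_of_ne hi]
    have hiv : (i : ℕ) ≠ (m : ℕ) := fun h => hi (Fin.ext h)
    show _ = if (i : ℕ) < (m : ℕ) then onehot z ⟨i, b⟩ else y ⟨i, b⟩
    by_cases hlt : (i : ℕ) < (m : ℕ)
    · rw [if_pos (by omega), if_pos hlt, hup]
    · rw [if_neg (by omega), if_neg hlt]

end Meta
namespace Meta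

/-- Lemma 2.1(b): `|E_{Q_y}[f(Z)] − F(y)| ≤ 2 ∑_i max_{ℓ,ℓ'} c_{i,ℓ;i,ℓ'}` for every `y ∈ Ŷ`. -/
theorem statement12 (n : ℕ) (K : Fin n → ℕ) (μ : (i : Fin n) → Fin (K i) → ℝ)
    (f : Conf K → ℝ) (F : Vec K → ℝ) (F1 : Idx K → Vec K → ℝ)
    (F2 : Idx K → Idx K → Vec K → ℝ)
    (hn : 1 ≤ n) (hK : ∀ i, 1 ≤ K i)
    (hμpos : ∀ i ℓ, 0 < μ i ℓ) (hμsum : ∀ i, ∑ ℓ, μ i ℓ = 1)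
    (hsmooth : SmoothData F F1 F2) (hFG : ∀ z, F (onehot z) = f z) :
    ∀ y ∈ Yhat K,
      |(∑ z : Conf K, Qy y z * f z) - F y| ≤
        2 * ∑ i : Fin n, ⨆ ℓ : Fin (K i), ⨆ ℓ' : Fin (K i), cC F2 ⟨i, ℓ⟩ ⟨i, ℓ'⟩ := by
  classical
  intro y hy
  obtain ⟨hyc, hysum⟩ := hy
  set c : Fin n → ℝ := fun i => ⨆ ℓ : Fin (K i), ⨆ ℓ' : Fin (K i), cC F2 ⟨i, ℓ⟩ ⟨i, ℓ'⟩
    with hcdef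
  set T : ℕ → ℝ := fun m => ∑ z : Conf K, Qy y z * F (hyb y z m) with hTdef
  have hQnn : ∀ z : Conf K, 0 ≤ Qy y z := Qy_nonneg hyc
  have hQ1 : ∑ z : Conf K, Qy y z = 1 := Qy_sum_one hysum
  have hstep : ∀ m : Fin n, |T ((m : ℕ) + 1) - T (m : ℕ)| ≤ 2 * c m := by
    intro m
    have hsplit := Qy_split y hysum m (fun z => F (hyb y z ((m : ℕ) + 1)))
    have hTm1 : T ((m : ℕ) + 1)
        = ∑ z : Conf K, Qy y z * ∑ a, y ⟨m, a⟩ * F (U1 (hyb y z m) ⟨m, a⟩) := by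
      show (∑ z : Conf K, Qy y z * F (hyb y z ((m : ℕ) + 1))) = _
      rw [hsplit]
      apply Finset.sum_congr rfl
      intro z _
      congr 1
      apply Finset.sum_congr rfl
      intro a _
      rw [hyb_succ y z m a]
    have hdiff : T ((m : ℕ) + 1) - T (m : ℕ)
        = ∑ z : Conf K, Qy y z *
            ((∑ a, y ⟨m, a⟩ * F (U1 (hyb y z m) ⟨m, a⟩)) - F (hyb y z m)) := by
      rw [hTm1]
      show _ - (∑ z : Conf K, Qy y z * F (hyb y z (m : ℕ))) = _
      rw [← Finset.sum_sub_distrib]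
      apply Finset.sum_congr rfl
      intros; ring
    have hbz : ∀ z : Conf K,
        |(∑ a, y ⟨m, a⟩ * F (U1 (hyb y z m) ⟨m, a⟩)) - F (hyb y z m)| ≤ 2 * c m := by
      intro z
      have hwc : hyb y z (m : ℕ) ∈ cube K := hyb_mem_cube hyc z (m : ℕ)
      have hrow : ∀ a : Fin (K m), hyb y z (m : ℕ) ⟨m, a⟩ = y ⟨m, a⟩ :=
        fun a => hyb_row (lt_irrefl (m : ℕ)) a
      have hsc := stepC hsmooth hK (hyb y z (m : ℕ)) hwc m
      have hrw1 : (∑ ℓ, hyb y z (m : ℕ) ⟨m, ℓ⟩ * F (U1 (hyb y z (m : ℕ)) ⟨m, ℓ⟩))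
          = ∑ a, y ⟨m, a⟩ * F (U1 (hyb y z (m : ℕ)) ⟨m, a⟩) :=
        Finset.sum_congr rfl fun a _ => by rw [hrow a]
      have hrw2 : (∑ ℓ, hyb y z (m : ℕ) ⟨m, ℓ⟩) = (1 : ℝ) := by
        rw [Finset.sum_congr rfl fun a _ => hrow a]
        exact hysum m
      rw [hrw1, hrw2] at hsc
      have h2cm : |1 - (1:ℝ)| * (∑ ℓ' : Fin (K m), bC F1 ⟨m, ℓ'⟩)
          + (1:ℝ) * ((⨆ ℓ : Fin (K m), ⨆ ℓ' : Fin (K m), cC F2 ⟨m, ℓ⟩ ⟨m, ℓ'⟩) / 2)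
            * (1 + 1) ^ 2 = 2 * c m := by
        rw [hcdef]
        simp only [sub_self, abs_zero, zero_mul, zero_add, one_mul]
        ring
      rw [h2cm, one_mul] at hsc
      exact hsc
    rw [hdiff]
    calc |∑ z : Conf K, Qy y z *
          ((∑ a, y ⟨m, a⟩ * F (U1 (hyb y z m) ⟨m, a⟩)) - F (hyb y z m))|
        ≤ ∑ z : Conf K, |Qy y z *
          ((∑ a, y ⟨m, a⟩ * F (U1 (hyb y z m) ⟨m, a⟩)) - F (hyb y z m))| :=
          Finset.abs_sum_le_sum_abs _ _
      _ ≤ ∑ z : Conf K, Qy y z * (2 * c m) := by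
          apply Finset.sum_le_sum
          intro z _
          rw [abs_mul, abs_of_nonneg (hQnn z)]
          exact mul_le_mul_of_nonneg_left (hbz z) (hQnn z)
      _ = 2 * c m := by rw [← Finset.sum_mul, hQ1, one_mul]
  set cN : ℕ → ℝ := fun j => if h : j < n then c ⟨j, h⟩ else 0 with hcNdef
  have htel : ∀ m : ℕ, m ≤ n → |T m - T 0| ≤ ∑ j ∈ Finset.range m, 2 * cN j := by
    intro m
    induction m with
    | zero => intro _; simp
    | succ j ih =>
        intro hj1
        have hjn : j < n := lt_of_lt_of_le (Nat.lt_succ_self j) hj1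
        have h1 := ih (le_of_lt hjn)
        have h2 := hstep ⟨j, hjn⟩
        have hcNj : cN j = c ⟨j, hjn⟩ := dif_pos hjn
        rw [Finset.sum_range_succ]
        calc |T (j + 1) - T 0| ≤ |T (j + 1) - T j| + |T j - T 0| := by
              have h3 : T (j + 1) - T 0 = (T (j + 1) - T j) + (T j - T 0) := by ring
              rw [h3]; exact abs_add_le _ _
          _ ≤ 2 * cN j + ∑ i ∈ Finset.range j, 2 * cN i := by
              rw [hcNj]
              exact add_le_add h2 h1
          _ = (∑ i ∈ Finset.range j, 2 * cN i) + 2 * cN j := by ring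
  have hTn : T n = ∑ z : Conf K, Qy y z * f z := by
    show (∑ z : Conf K, Qy y z * F (hyb y z n)) = _
    apply Finset.sum_congr rfl
    intro z _
    rw [hyb_top, hFG z]
  have hT0 : T 0 = F y := by
    show (∑ z : Conf K, Qy y z * F (hyb y z 0)) = _
    calc ∑ z : Conf K, Qy y z * F (hyb y z 0) = ∑ z : Conf K, Qy y z * F y := by
          apply Finset.sum_congr rfl
          intro z _
          rw [hyb_zero]
      _ = (∑ z : Conf K, Qy y z) * F y := (Finset.sum_mul _ _ _).symm
      _ = F y := by rw [hQ1, one_mul]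
  have hfinal := htel n (le_refl n)
  rw [hTn, hT0] at hfinal
  have hsum : ∑ j ∈ Finset.range n, 2 * cN j = 2 * ∑ i : Fin n, c i := by
    rw [← Fin.sum_univ_eq_sum_range (fun j => 2 * cN j) n]
    rw [Finset.mul_sum]
    apply Finset.sum_congr rfl
    intro i _
    rw [hcNdef]
    simp only [dif_pos i.isLt]
  rw [hsum] at hfinal
  exact hfinal

end Meta
end
end

section
/- There exists an absolute constant C > 0 such that for all integers n ≥ 1 and K ≥ 1 and every u = (u_1,…,u_K) ∈ 𝔖: |D(u)| ≥ exp( (1/2)·( ∑_{ℓ=1}^K log(max{u_ℓ,1}) − max_{ℓ∈[K]} log(max{u_ℓ,1}) ) − C·K ). -/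
/-!
Sort `u` increasingly. For every choice of integers `0 ≤ d_j ≤ √u_j / 2`, one for each coordinate
but the largest, moving `d_j` units from the `j`-th to the `(j+1)`-st coordinate yields a distinct
`v` with the same sum. Since `u` is sorted, `|v_ℓ - u_ℓ| ≤ √u_ℓ / 2`, so `v_ℓ ≤ 2 u_ℓ` and
`ρ(u_ℓ, v_ℓ) ≥ (u_ℓ + v_ℓ) log 2 - (u_ℓ - v_ℓ)² / (u_ℓ + v_ℓ) ≥ (u_ℓ + v_ℓ) log 2 - 1/4`.
Hence all these `v` lie in `D(u)`, and there are `∏_j (⌊√u_j⌋ / 2 + 1) ≥ ∏_j √max(u_j, 1) / 2`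
of them, the product running over all coordinates but the largest.
-/

open BigOperators

/-- `ρ(u,v) := (u+v)log(u+v) − u log u − v log v` (with `0·log 0 = 0`). -/
noncomputable def rhoFn (u v : ℝ) : ℝ :=
  (u + v) * Real.log (u + v) - u * Real.log u - v * Real.log v

open Finset Real

theorem Finset.card_le_natCard_subtype {α : Type*} {P : α → Prop} (hP : {x | P x}.Finite)
    (S : Finset α) (hS : ∀ x ∈ S, P x) : #S ≤ Nat.card {x // P x} :=
  (Nat.card_eq_finsetCard S).symm.le.trans (Nat.card_mono hP fun x hx => hS x hx)

lemma mul_log_two_mul_div_le (x s : ℝ) (hx : 0 ≤ x) (hs : 0 < s) :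
    x * (log 2 + log x - log s) ≤ x * (2 * x - s) / s := by
  rcases hx.eq_or_lt with rfl | hx
  · simp
  calc x * (log 2 + log x - log s) = x * log (2 * x / s) := by
        rw [log_div (by positivity) hs.ne', log_mul two_ne_zero hx.ne']
    _ ≤ x * (2 * x / s - 1) :=
        mul_le_mul_of_nonneg_left (log_le_sub_one_of_pos (by positivity)) hx.le
    _ = x * (2 * x - s) / s := by field_simp

-- `ρ(x,y) = (x+y) (log 2 - KL(p ‖ 1/2))` with `p = x/(x+y)`, and the KL divergence is at most `χ²`.
lemma rhoFn_ge (x y : ℝ) (hx : 0 ≤ x) (hy : 0 ≤ y) :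
    (x + y) * log 2 - (x - y) ^ 2 / (x + y) ≤ rhoFn x y := by
  rcases (add_nonneg hx hy).eq_or_lt with hs | hs
  · obtain ⟨rfl, rfl⟩ : x = 0 ∧ y = 0 := ⟨by linarith, by linarith⟩
    simp [rhoFn]
  have hchi : x * (2 * x - (x + y)) / (x + y) + y * (2 * y - (x + y)) / (x + y)
      = (x - y) ^ 2 / (x + y) := by
    field_simp; ring
  have := mul_log_two_mul_div_le x (x + y) hx hs
  have := mul_log_two_mul_div_le y (x + y) hy hs
  unfold rhoFn
  linarith

lemma rhoFn_ge_of_four_mul_sq_le (x y : ℝ) (hx : 0 ≤ x) (hy : 0 ≤ y) (h : 4 * (x - y) ^ 2 ≤ x) :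
    (x + y) * log 2 - 1 / 4 ≤ rhoFn x y := by
  have hchi : (x - y) ^ 2 / (x + y) ≤ 1 / 4 := by
    rcases (add_nonneg hx hy).eq_or_lt with hs | hs
    · rw [← hs, div_zero]; norm_num
    · rw [div_le_iff₀ hs]; linarith
  linarith [rhoFn_ge x y hx hy]

lemma log_max_one_le_log_two_add {u v : ℕ} (h : v ≤ 2 * u) :
    log (max v 1 : ℕ) ≤ log 2 + log (max u 1 : ℕ) := by
  have hle : ((max v 1 : ℕ) : ℝ) ≤ 2 * (max u 1 : ℕ) := by
    exact_mod_cast (by omega : max v 1 ≤ 2 * max u 1)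
  rw [← log_mul two_ne_zero (by positivity)]
  exact log_le_log (by positivity) hle

namespace Nat

lemma four_mul_sq_sqrt_div_two_le (m : ℕ) : 4 * (m.sqrt / 2) ^ 2 ≤ m :=
  calc 4 * (m.sqrt / 2) ^ 2 = (2 * (m.sqrt / 2)) ^ 2 := by ring
    _ ≤ m.sqrt ^ 2 := Nat.pow_le_pow_left (Nat.mul_div_le _ _) _
    _ ≤ m := Nat.sqrt_le' m

lemma sqrt_div_two_le_self (m : ℕ) : m.sqrt / 2 ≤ m :=
  (Nat.div_le_self _ _).trans (Nat.sqrt_le_self _)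

lemma max_one_le_four_mul_sq_sqrt_div_two_add_one (m : ℕ) :
    max m 1 ≤ 4 * (m.sqrt / 2 + 1) ^ 2 := by
  have h := Nat.lt_succ_sqrt m
  have : m.sqrt + 1 ≤ 2 * (m.sqrt / 2 + 1) := by omega
  have := Nat.mul_le_mul this this
  rw [max_le_iff]; constructor <;> nlinarith

end Nat

lemma Monotone.sqrt_div_two {ι : Type*} [Preorder ι] {w : ι → ℕ} (hw : Monotone w) :
    Monotone fun i => (w i).sqrt / 2 :=
  fun _ _ hij => Nat.div_le_div_right (Nat.sqrt_le_sqrt (hw hij))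

lemma half_log_max_one_sub_log_two_le (m : ℕ) :
    log (max m 1 : ℕ) / 2 - log 2 ≤ log (m.sqrt / 2 + 1 : ℕ) := by
  have h : ((max m 1 : ℕ) : ℝ) ≤ 2 ^ 2 * ((m.sqrt / 2 + 1 : ℕ) : ℝ) ^ 2 := by
    exact_mod_cast (by simpa using Nat.max_one_le_four_mul_sq_sqrt_div_two_add_one m)
  have := log_le_log (by positivity) h
  rw [log_mul (by positivity) (by positivity), log_pow, log_pow] at this
  push_cast at this ⊢
  linarith

namespace Fin

variable {k : ℕ}

-- Coordinate `j < k` of `w` passes `d j` units on to coordinate `j + 1`: `snoc d 0` is what each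
-- coordinate gives away, `cons 0 d` what it receives.
def chainTransfer (w : Fin (k + 1) → ℕ) (d : Fin k → ℕ) : Fin (k + 1) → ℕ :=
  fun i => w i - snoc (α := fun _ => ℕ) d 0 i + cons (α := fun _ => ℕ) 0 d i

lemma snoc_zero_le {a : Fin (k + 1) → ℕ} {d : Fin k → ℕ} (hd : ∀ j, d j ≤ a j.castSucc)
    (i : Fin (k + 1)) : snoc (α := fun _ => ℕ) d 0 i ≤ a i := by
  induction i using lastCases <;> simp [hd]

lemma cons_zero_le {a : Fin (k + 1) → ℕ} (ha : Monotone a) {d : Fin k → ℕ}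
    (hd : ∀ j, d j ≤ a j.castSucc) (i : Fin (k + 1)) : cons (α := fun _ => ℕ) 0 d i ≤ a i := by
  induction i using cases with
  | zero => simp
  | succ j => simpa using (hd j).trans (ha (castSucc_le_succ j))

lemma chainTransfer_add_snoc {w : Fin (k + 1) → ℕ} {d : Fin k → ℕ}
    (hd : ∀ j, d j ≤ w j.castSucc) (i : Fin (k + 1)) :
    chainTransfer w d i + snoc (α := fun _ => ℕ) d 0 i = w i + cons (α := fun _ => ℕ) 0 d i := by
  have := snoc_zero_le hd i
  simp only [chainTransfer]
  omega

lemma sum_chainTransfer {w : Fin (k + 1) → ℕ} {d : Fin k → ℕ} (hd : ∀ j, d j ≤ w j.castSucc) :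
    ∑ i, chainTransfer w d i = ∑ i, w i := by
  have h := Finset.sum_congr rfl fun i (_ : i ∈ Finset.univ) => chainTransfer_add_snoc hd i
  simp only [Finset.sum_add_distrib, sum_univ_castSucc (snoc _ _), sum_univ_succ (cons _ _),
    snoc_castSucc, snoc_last, cons_zero, cons_succ] at h
  omega

lemma chainTransfer_injOn (w : Fin (k + 1) → ℕ) :
    Set.InjOn (chainTransfer w) {d | ∀ j, d j ≤ w j.castSucc} := by
  intro d hd e he hde
  -- The amount received by coordinate `i` determines the amount it passes on.
  have hcons : ∀ i, cons (α := fun _ => ℕ) 0 d i = cons (α := fun _ => ℕ) 0 e i := by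
    intro i
    induction i using induction with
    | zero => simp
    | succ j ih =>
      have hd' := chainTransfer_add_snoc hd j.castSucc
      have he' := chainTransfer_add_snoc he j.castSucc
      simp only [snoc_castSucc, cons_succ] at hd' he' ⊢
      rw [hde] at hd'
      omega
  funext j
  simpa using hcons j.succ

variable {w a : Fin (k + 1) → ℕ} {d : Fin k → ℕ}

lemma le_chainTransfer_add (haw : a ≤ w) (hd : ∀ j, d j ≤ a j.castSucc) (i : Fin (k + 1)) :
    w i ≤ chainTransfer w d i + a i := by
  have := snoc_zero_le hd i
  have := haw i
  simp only [chainTransfer]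
  omega

lemma chainTransfer_le_add (ha : Monotone a) (hd : ∀ j, d j ≤ a j.castSucc) (i : Fin (k + 1)) :
    chainTransfer w d i ≤ w i + a i := by
  have := cons_zero_le ha hd i
  simp only [chainTransfer]
  omega

end Fin

lemma two_mul_log_two_mul_sub_le_sum_rhoFn {ι : Type*} [Fintype ι] {N : ℕ} {u v : ι → ℕ}
    (hu : ∑ ℓ, u ℓ = N) (hv : ∑ ℓ, v ℓ = N) (hclose : ∀ ℓ, 4 * ((u ℓ : ℝ) - v ℓ) ^ 2 ≤ u ℓ) :
    2 * log 2 * N - Fintype.card ι / 4 ≤ ∑ ℓ, rhoFn (u ℓ) (v ℓ) := by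
  have hsum : ∑ ℓ, ((u ℓ : ℝ) + v ℓ) = 2 * N := by
    rw [sum_add_distrib]; exact_mod_cast (by omega : ∑ ℓ, u ℓ + ∑ ℓ, v ℓ = 2 * N)
  calc 2 * log 2 * N - Fintype.card ι / 4 = ∑ ℓ, (((u ℓ : ℝ) + v ℓ) * log 2 - 1 / 4) := by
        rw [sum_sub_distrib, ← sum_mul, hsum, sum_const, card_univ, nsmul_eq_mul]; ring
    _ ≤ ∑ ℓ, rhoFn (u ℓ) (v ℓ) := sum_le_sum fun ℓ _ =>
        rhoFn_ge_of_four_mul_sq_le _ _ (by positivity) (by positivity) (hclose ℓ)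

lemma sum_log_max_one_le {ι : Type*} [Fintype ι] {u v : ι → ℕ} (hle : ∀ ℓ, v ℓ ≤ 2 * u ℓ) :
    ∑ ℓ, log (max (v ℓ) 1 : ℕ) ≤ Fintype.card ι * log 2 + ∑ ℓ, log (max (u ℓ) 1 : ℕ) := by
  grw [sum_le_sum fun ℓ _ => log_max_one_le_log_two_add (hle ℓ), sum_add_distrib, sum_const,
    card_univ, nsmul_eq_mul]

lemma half_sum_log_max_one_sub_le {k : ℕ} (w : Fin (k + 1) → ℕ) :
    (1 / 2) * (∑ i, log (max (w i) 1 : ℕ) - log (max (w (Fin.last k)) 1 : ℕ)) - k * log 2 ≤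
      ∑ j : Fin k, log ((w j.castSucc).sqrt / 2 + 1 : ℕ) := by
  calc (1 / 2) * (∑ i, log (max (w i) 1 : ℕ) - log (max (w (Fin.last k)) 1 : ℕ)) - k * log 2
      = ∑ j : Fin k, (log (max (w j.castSucc) 1 : ℕ) / 2 - log 2) := by
        rw [Fin.sum_univ_castSucc, sum_sub_distrib, ← sum_div, sum_const, card_univ,
          Fintype.card_fin, nsmul_eq_mul]; ring
    _ ≤ _ := sum_le_sum fun j _ => half_log_max_one_sub_log_two_le _

section SortedTransfer

variable {k : ℕ} {w : Fin (k + 1) → ℕ} {d : Fin k → ℕ}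

lemma four_mul_sq_sub_chainTransfer_le (hw : Monotone w)
    (hd : ∀ j, d j ≤ (w j.castSucc).sqrt / 2) (i : Fin (k + 1)) :
    4 * ((w i : ℝ) - Fin.chainTransfer w d i) ^ 2 ≤ w i := by
  have hlo : (w i : ℝ) ≤ Fin.chainTransfer w d i + ((w i).sqrt / 2 : ℕ) := by
    exact_mod_cast Fin.le_chainTransfer_add (fun i => Nat.sqrt_div_two_le_self _) hd i
  have hhi : (Fin.chainTransfer w d i : ℝ) ≤ w i + ((w i).sqrt / 2 : ℕ) := by
    exact_mod_cast Fin.chainTransfer_le_add hw.sqrt_div_two hd i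
  have hsq : 4 * (((w i).sqrt / 2 : ℕ) : ℝ) ^ 2 ≤ w i := by
    exact_mod_cast Nat.four_mul_sq_sqrt_div_two_le (w i)
  have := sq_le_sq' (by linarith : -(((w i).sqrt / 2 : ℕ) : ℝ) ≤ w i - Fin.chainTransfer w d i)
    (by linarith)
  linarith

lemma chainTransfer_le_two_mul (hw : Monotone w) (hd : ∀ j, d j ≤ (w j.castSucc).sqrt / 2)
    (i : Fin (k + 1)) : Fin.chainTransfer w d i ≤ 2 * w i := by
  have := Fin.chainTransfer_le_add (w := w) hw.sqrt_div_two hd i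
  have := Nat.sqrt_div_two_le_self (w i)
  omega

theorem exists_finset_close_card_ge (u : Fin (k + 1) → ℕ) :
    ∃ S : Finset (Fin (k + 1) → ℕ),
      exp ((1 / 2) * (∑ ℓ, log (max (u ℓ) 1 : ℕ) -
          log (max (u (Tuple.sort u (Fin.last k))) 1 : ℕ)) - k * log 2) ≤ #S ∧
      ∀ v ∈ S, ∑ ℓ, v ℓ = ∑ ℓ, u ℓ ∧ (∀ ℓ, 4 * ((u ℓ : ℝ) - v ℓ) ^ 2 ≤ u ℓ) ∧
        ∀ ℓ, v ℓ ≤ 2 * u ℓ := by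
  set σ := Tuple.sort u
  set w := u ∘ σ
  have hw : Monotone w := Tuple.monotone_sort u
  set box := Fintype.piFinset fun j : Fin k => Iic ((w j.castSucc).sqrt / 2)
  have hbox : ∀ d ∈ box, ∀ j, d j ≤ (w j.castSucc).sqrt / 2 := by simp [box]
  refine ⟨box.image fun d => Fin.chainTransfer w d ∘ σ.symm, ?_, ?_⟩
  · have hinj : Set.InjOn (fun d => Fin.chainTransfer w d ∘ σ.symm) box := fun d hd e he hde =>
      Fin.chainTransfer_injOn w (fun j => (hbox d hd j).trans (Nat.sqrt_div_two_le_self _))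
        (fun j => (hbox e he j).trans (Nat.sqrt_div_two_le_self _))
        (σ.symm.surjective.injective_comp_right hde)
    rw [card_image_of_injOn hinj, Fintype.card_piFinset, ← Equiv.sum_comp σ]
    simp only [Nat.card_Iic, Nat.cast_prod]
    calc _ ≤ exp (∑ j : Fin k, log ((w j.castSucc).sqrt / 2 + 1 : ℕ)) :=
          exp_le_exp.2 (half_sum_log_max_one_sub_le w)
      _ = _ := by rw [exp_sum]; exact prod_congr rfl fun j _ => exp_log (by positivity)
  · simp only [mem_image]
    rintro v ⟨d, hd, rfl⟩
    have hd := hbox d hd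
    refine ⟨?_, fun ℓ => ?_, fun ℓ => ?_⟩
    · exact (Equiv.sum_comp σ.symm _).trans
        ((Fin.sum_chainTransfer fun j => (hd j).trans (Nat.sqrt_div_two_le_self _)).trans
          (Equiv.sum_comp σ u))
    · simpa [w] using four_mul_sq_sub_chainTransfer_le hw hd (σ.symm ℓ)
    · simpa [w] using chainTransfer_le_two_mul hw hd (σ.symm ℓ)

end SortedTransfer

/-- There is an absolute constant `C > 0` such that for all `n, K ≥ 1` and every
`u ∈ 𝔖 = {u ∈ ℕ^K : ∑ u_ℓ = n−1}`, the set `D(u)` defined in the paper has cardinality at least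
`exp((1/2)(∑_ℓ log max{u_ℓ,1} − max_ℓ log max{u_ℓ,1}) − C K)`. -/
theorem statement16 :
    ∃ C : ℝ, 0 < C ∧
      ∀ (n K : ℕ), 1 ≤ n → 1 ≤ K →
        ∀ u : Fin K → ℕ, (∑ ℓ, u ℓ = n - 1) →
          Real.exp ((1 / 2) *
              ((∑ ℓ, Real.log (max (u ℓ) 1 : ℕ)) - ⨆ ℓ, Real.log (max (u ℓ) 1 : ℕ))
            - C * K) ≤
          (Nat.card {v : Fin K → ℕ //
              (∑ ℓ, v ℓ = n - 1) ∧
              2 * Real.log 2 * ((n : ℝ) - 1) - K / 4 ≤ ∑ ℓ, rhoFn (u ℓ) (v ℓ) ∧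
              (∑ ℓ, Real.log (max (v ℓ) 1 : ℕ)) ≤
                K * Real.log 2 + ∑ ℓ, Real.log (max (u ℓ) 1 : ℕ)} : ℝ) := by
  refine ⟨log 2, log_pos one_lt_two, ?_⟩
  rintro n K hn hK u hu
  obtain ⟨k, rfl⟩ : ∃ k, K = k + 1 := ⟨K - 1, by omega⟩
  obtain ⟨S, hcard, hS⟩ := exists_finset_close_card_ge u
  have hsup : log (max (u (Tuple.sort u (Fin.last k))) 1 : ℕ) ≤ ⨆ ℓ, log (max (u ℓ) 1 : ℕ) :=
    le_ciSup (f := fun ℓ => log (max (u ℓ) 1 : ℕ)) (Set.finite_range _).bddAbove _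
  have hfin : {v : Fin (k + 1) → ℕ | ∑ ℓ, v ℓ = n - 1}.Finite :=
    (Nat.antidiagonalTuple _ _).finite_toSet.subset fun v hv => Nat.mem_antidiagonalTuple.2 hv
  calc _ ≤ exp ((1 / 2) * (∑ ℓ, log (max (u ℓ) 1 : ℕ) -
          log (max (u (Tuple.sort u (Fin.last k))) 1 : ℕ)) - k * log 2) := by
        refine exp_le_exp.2 ?_; rw [Nat.cast_succ]; linarith [log_pos one_lt_two]
    _ ≤ #S := hcard
    _ ≤ _ := by
      refine Nat.cast_le.2
        (card_le_natCard_subtype (hfin.subset fun v hv => hv.1) S fun v hv => ?_)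
      obtain ⟨hsum, hclose, hle⟩ := hS v hv
      refine ⟨hsum.trans hu, ?_, by simpa using sum_log_max_one_le hle⟩
      simpa [Nat.cast_sub hn] using
        two_mul_log_two_mul_sub_le_sum_rhoFn hu (hsum.trans hu) hclose
end

section
/- For all real numbers u > 0 and v > 0: (u+v)·log(u+v) − u·log u − v·log v ≥ log(2)·(u+v) − (v−u)²/(2·min{u,v}). -/
/-- For all real numbers `u > 0` and `v > 0`:
`(u+v)·log(u+v) − u·log u − v·log v ≥ log(2)·(u+v) − (v−u)²/(2·min{u,v})`. -/
theorem statement17 (u v : ℝ) (hu : 0 < u) (hv : 0 < v) :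
    Real.log 2 * (u + v) - (v - u) ^ 2 / (2 * min u v) ≤
      (u + v) * Real.log (u + v) - u * Real.log u - v * Real.log v := by
  have hs : 0 < u + v := by linarith
  have hm : 0 < min u v := lt_min hu hv
  have h1 : Real.log (2 * u / (u + v)) ≤ 2 * u / (u + v) - 1 :=
    Real.log_le_sub_one_of_pos (by positivity)
  have h2 : Real.log (2 * v / (u + v)) ≤ 2 * v / (u + v) - 1 :=
    Real.log_le_sub_one_of_pos (by positivity)
  have e1 : Real.log (2 * u / (u + v)) = Real.log 2 + Real.log u - Real.log (u + v) := by
    rw [Real.log_div (by positivity) (by positivity), Real.log_mul (by norm_num) hu.ne']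
  have e2 : Real.log (2 * v / (u + v)) = Real.log 2 + Real.log v - Real.log (u + v) := by
    rw [Real.log_div (by positivity) (by positivity), Real.log_mul (by norm_num) hv.ne']
  have hA : u * (Real.log 2 + Real.log u - Real.log (u + v))
      + v * (Real.log 2 + Real.log v - Real.log (u + v))
      ≤ u * (2 * u / (u + v) - 1) + v * (2 * v / (u + v) - 1) := by
    rw [← e1, ← e2]
    exact add_le_add (mul_le_mul_of_nonneg_left h1 hu.le) (mul_le_mul_of_nonneg_left h2 hv.le)
  have hB : u * (2 * u / (u + v) - 1) + v * (2 * v / (u + v) - 1) = (v - u) ^ 2 / (u + v) := by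
    field_simp; ring
  have hC : (v - u) ^ 2 / (u + v) ≤ (v - u) ^ 2 / (2 * min u v) := by
    apply div_le_div_of_nonneg_left (by positivity) (by positivity)
    rcases min_cases u v with ⟨h, _⟩ | ⟨h, _⟩ <;> rw [h] <;> linarith
  nlinarith [hA, hB, hC]
end

section
/- Let m ≥ 1 and let X₁,…,X_m be independent random variables on a probability space, each taking values in {0,1}. Set N := X₁ + ⋯ + X_m and μ := E[N]. If μ > 0, then E[N·log N] ≤ μ·log μ + 1, where 0·log 0 := 0; equivalently, E[N·log(N/μ)] ≤ 1. -/
/-!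
Write `N = ∑ₖ Xₖ` and `Nₖ = N - Xₖ`. Since `Xₖ ∈ {0,1}`, pointwise `N log N = ∑ₖ Xₖ log (1 + Nₖ)`.
Each `Xₖ` is independent of `Nₖ`, so `E[Xₖ log (1 + Nₖ)] = E[Xₖ] E[log (1 + Nₖ)]`, and Jensen gives
`E[log (1 + Nₖ)] ≤ log (1 + E[N])`. Summing over `k`, `E[N log N] ≤ E[N] log (1 + E[N])`, and
`x log (1 + x) ≤ x log x + 1` because `log (1 + 1/x) ≤ 1/x`.
-/

open MeasureTheory ProbabilityTheory Finset Real

lemma mul_log_one_add_le_mul_log_add_one {x : ℝ} (hx : 0 ≤ x) :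
    x * log (1 + x) ≤ x * log x + 1 := by
  rcases hx.eq_or_lt with rfl | hx
  · simp
  have h : log ((1 + x) / x) ≤ (1 + x) / x - 1 := log_le_sub_one_of_pos (by positivity)
  rw [log_div (by positivity) hx.ne'] at h
  have h' := mul_le_mul_of_nonneg_left h hx.le
  have hone : x * ((1 + x) / x - 1) = 1 := by field_simp; ring
  linarith

lemma nonneg_of_eq_zero_or_eq_one {x : ℝ} (h : x = 0 ∨ x = 1) : 0 ≤ x := by
  rcases h with rfl | rfl <;> norm_num

lemma sum_mul_log_sum_eq_sum_mul_log_one_add_sum_erase {ι : Type*} [DecidableEq ι]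
    (s : Finset ι) {x : ι → ℝ} (hx : ∀ i ∈ s, x i = 0 ∨ x i = 1) :
    (∑ i ∈ s, x i) * log (∑ i ∈ s, x i) = ∑ i ∈ s, x i * log (1 + ∑ j ∈ s.erase i, x j) := by
  rw [sum_mul]
  refine sum_congr rfl fun i hi => ?_
  rcases hx i hi with h | h
  · simp [h]
  · rw [← add_sum_erase s x hi, h]

namespace MeasureTheory

variable {Ω : Type*} [MeasurableSpace Ω] {μ : Measure Ω}

lemma Integrable.of_forall_eq_zero_or_eq_one [IsFiniteMeasure μ] {f : Ω → ℝ}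
    (hf : Measurable f) (h01 : ∀ ω, f ω = 0 ∨ f ω = 1) : Integrable f μ :=
  .of_bound hf.aestronglyMeasurable 1 <| .of_forall fun ω => by rcases h01 ω with h | h <;> simp [h]

lemma Integrable.log_one_add {Y : Ω → ℝ} (hY : Integrable Y μ) (hY0 : 0 ≤ᵐ[μ] Y) :
    Integrable (fun ω => log (1 + Y ω)) μ := by
  refine hY.mono' (measurable_log.comp_aemeasurable
    (hY.aemeasurable.const_add 1)).aestronglyMeasurable ?_
  filter_upwards [hY0] with ω (hω : 0 ≤ Y ω)
  rw [Real.norm_of_nonneg (log_nonneg (by linarith))]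
  linarith [log_le_sub_one_of_pos (by linarith : (0 : ℝ) < 1 + Y ω)]

lemma integral_log_one_add_le_log_one_add_integral [IsProbabilityMeasure μ] {Y : Ω → ℝ}
    (hY : Integrable Y μ) (hY0 : 0 ≤ᵐ[μ] Y) :
    ∫ ω, log (1 + Y ω) ∂μ ≤ log (1 + ∫ ω, Y ω ∂μ) := by
  have hconc : ConcaveOn ℝ (Set.Ici 1) log :=
    strictConcaveOn_log_Ioi.concaveOn.subset (fun x (hx : 1 ≤ x) => one_pos.trans_le hx)
      (convex_Ici 1)
  have hcont : ContinuousOn log (Set.Ici 1) :=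
    continuousOn_log.mono fun x hx => (one_pos.trans_le hx).ne'
  have := hconc.le_map_integral (f := fun ω => 1 + Y ω) hcont isClosed_Ici
    (hY0.mono fun ω hω => by simpa using hω) ((integrable_const 1).add hY) (hY.log_one_add hY0)
  rwa [integral_add (integrable_const 1) hY, integral_const, probReal_univ, one_smul] at this

end MeasureTheory

section

variable {Ω : Type*} [MeasurableSpace Ω] {μ : Measure Ω} [IsProbabilityMeasure μ]
  {ι : Type*} [Fintype ι] [DecidableEq ι] {X : ι → Ω → ℝ}

lemma integrable_mul_log_one_add_sum_erase (hmeas : ∀ k, Measurable (X k))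
    (h01 : ∀ k ω, X k ω = 0 ∨ X k ω = 1) (k : ι) :
    Integrable (fun ω => X k ω * log (1 + ∑ j ∈ univ.erase k, X j ω)) μ := by
  have hNint : Integrable (fun ω => ∑ j ∈ univ.erase k, X j ω) μ :=
    integrable_finsetSum _ fun j _ => .of_forall_eq_zero_or_eq_one (hmeas j) (h01 j)
  refine (hNint.log_one_add (.of_forall fun ω => sum_nonneg fun j _ => ?_)).bdd_mul
    (c := 1) (hmeas k).aestronglyMeasurable (.of_forall fun ω => ?_)
  · exact nonneg_of_eq_zero_or_eq_one (h01 j ω)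
  · rcases h01 k ω with h | h <;> simp [h]

lemma integral_mul_log_one_add_sum_erase_le (hmeas : ∀ k, Measurable (X k))
    (h01 : ∀ k ω, X k ω = 0 ∨ X k ω = 1) (hindep : iIndepFun X μ) (k : ι) :
    ∫ ω, X k ω * log (1 + ∑ j ∈ univ.erase k, X j ω) ∂μ ≤
      (∫ ω, X k ω ∂μ) * log (1 + ∫ ω, ∑ j, X j ω ∂μ) := by
  have hX0 : ∀ j ω, 0 ≤ X j ω := fun j ω => nonneg_of_eq_zero_or_eq_one (h01 j ω)
  have hXint : ∀ j, Integrable (X j) μ := fun j =>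
    .of_forall_eq_zero_or_eq_one (hmeas j) (h01 j)
  have hindep_k : IndepFun (X k) (fun ω => log (1 + ∑ j ∈ univ.erase k, X j ω)) μ := by
    have := (hindep.indepFun_finsetSum_of_notMem hmeas (notMem_erase k univ)).symm
    simpa [Function.comp_def] using
      this.comp measurable_id ((measurable_const (a := (1 : ℝ))).add measurable_id).log
  have hNmeas : Measurable fun ω => ∑ j ∈ univ.erase k, X j ω :=
    Finset.measurable_sum _ fun j _ => hmeas j
  have hNint : Integrable (fun ω => ∑ j ∈ univ.erase k, X j ω) μ :=
    integrable_finsetSum _ fun j _ => hXint j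
  have hN0 : 0 ≤ ∫ ω, ∑ j ∈ univ.erase k, X j ω ∂μ :=
    integral_nonneg fun ω => sum_nonneg fun j _ => hX0 j ω
  rw [hindep_k.integral_fun_mul_eq_mul_integral (hmeas k).aestronglyMeasurable
    (measurable_const.add hNmeas).log.aestronglyMeasurable]
  refine mul_le_mul_of_nonneg_left ?_ (integral_nonneg (hX0 k))
  calc ∫ ω, log (1 + ∑ j ∈ univ.erase k, X j ω) ∂μ
      ≤ log (1 + ∫ ω, ∑ j ∈ univ.erase k, X j ω ∂μ) :=
        integral_log_one_add_le_log_one_add_integral hNint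
          (.of_forall fun ω => sum_nonneg fun j _ => hX0 j ω)
    _ ≤ log (1 + ∫ ω, ∑ j, X j ω ∂μ) := by
        refine log_le_log (by linarith) (add_le_add_right ?_ 1)
        exact integral_mono hNint (integrable_finsetSum _ fun j _ => hXint j) fun ω =>
          sum_le_sum_of_subset_of_nonneg (erase_subset k univ) fun j _ _ => hX0 j ω

end

theorem statement19_general {Ω : Type*} [MeasurableSpace Ω] (μ : Measure Ω) [IsProbabilityMeasure μ]
    (m : ℕ) (X : Fin m → Ω → ℝ)
    (hmeas : ∀ k, Measurable (X k))
    (h01 : ∀ k ω, X k ω = 0 ∨ X k ω = 1)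
    (hindep : ProbabilityTheory.iIndepFun (m := fun _ => Real.measurableSpace) X μ) :
    ∫ ω, (∑ k, X k ω) * Real.log (∑ k, X k ω) ∂μ ≤
      (∫ ω, (∑ k, X k ω) ∂μ) * Real.log (∫ ω, (∑ k, X k ω) ∂μ) + 1 := by
  set M := ∫ ω, (∑ k, X k ω) ∂μ
  have hM : M = ∑ k, ∫ ω, X k ω ∂μ :=
    integral_finsetSum _ fun k _ => .of_forall_eq_zero_or_eq_one (hmeas k) (h01 k)
  calc ∫ ω, (∑ k, X k ω) * log (∑ k, X k ω) ∂μ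
      = ∑ k, ∫ ω, X k ω * log (1 + ∑ j ∈ univ.erase k, X j ω) ∂μ := by
        simp_rw [sum_mul_log_sum_eq_sum_mul_log_one_add_sum_erase univ fun k _ => h01 k _]
        exact integral_finsetSum _ fun k _ => integrable_mul_log_one_add_sum_erase hmeas h01 k
    _ ≤ ∑ k, (∫ ω, X k ω ∂μ) * log (1 + M) :=
        sum_le_sum fun k _ => integral_mul_log_one_add_sum_erase_le hmeas h01 hindep k
    _ = M * log (1 + M) := by rw [← sum_mul, hM]
    _ ≤ M * log M + 1 := mul_log_one_add_le_mul_log_add_one <|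
        integral_nonneg fun ω => sum_nonneg fun k _ => nonneg_of_eq_zero_or_eq_one (h01 k ω)

/-- If `X₁,…,X_m` are independent `{0,1}`-valued random variables, `N := ∑ Xₖ` and
`μ̄ := E[N] > 0`, then `E[N log N] ≤ μ̄ log μ̄ + 1`. -/
theorem statement19 {Ω : Type*} [MeasurableSpace Ω] (μ : Measure Ω) [IsProbabilityMeasure μ]
    (m : ℕ) (hm : 1 ≤ m) (X : Fin m → Ω → ℝ)
    (hmeas : ∀ k, Measurable (X k))
    (h01 : ∀ k ω, X k ω = 0 ∨ X k ω = 1)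
    (hindep : ProbabilityTheory.iIndepFun (m := fun _ => Real.measurableSpace) X μ)
    (hpos : 0 < ∫ ω, (∑ k, X k ω) ∂μ) :
    ∫ ω, (∑ k, X k ω) * Real.log (∑ k, X k ω) ∂μ ≤
      (∫ ω, (∑ k, X k ω) ∂μ) * Real.log (∫ ω, (∑ k, X k ω) ∂μ) + 1 :=
  statement19_general μ m X hmeas h01 hindep
end
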